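/- arXiv:1801.01412 — 6 statements merged into one kernel-verified Lean document; each statement's English description precedes it below -/
import Mathlib

section
/- Suppose p ∈ ℤ^n and q ∈ ℤ^m have positive nonincreasing entries with Σ_j p_j = Σ_i q_i = N. Then trun_{P,Q} T is rank-nondecreasing (i.e., rank((trun_{P,Q} T)(X)) ≥ rank(X) for every positive-semidefinite X ∈ Mat_N(ℂ)) if and only if T is (P,Q)-rank-nondecreasing. -/
open Matrix BigOperators ComplexOrder

noncomputable section

/-- `η_j` : the projection onto the first `j` coordinates, as a `j × k` matrix. -/
def proj (j k : ℕ) : Matrix (Fin j) (Fin k) ℂ :=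
  Matrix.of fun i l => if (i : ℕ) = (l : ℕ) then 1 else 0

/-- `Δa_j = a_j − a_{j+1}`, with the convention `a_{k+1} = 0`. -/
def delta {k : ℕ} (a : Fin k → ℝ) (j : Fin k) : ℝ :=
  a j - (if h : (j : ℕ) + 1 < k then a ⟨(j : ℕ) + 1, h⟩ else 0)

/-- Integer version of `delta`. -/
def deltaNat {k : ℕ} (a : Fin k → ℕ) (j : Fin k) : ℕ :=
  a j - (if h : (j : ℕ) + 1 < k then a ⟨(j : ℕ) + 1, h⟩ else 0)

/-- The relative determinant `det(diag a, X) = ∏_j det(η_j X η_j†)^{Δa_j}` (real exponents,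
with the convention `0 ^ 0 = 1`). -/
def relDet {k : ℕ} (a : Fin k → ℝ) (X : Matrix (Fin k) (Fin k) ℂ) : ℝ :=
  ∏ j : Fin k,
    ((proj ((j : ℕ) + 1) k * X * (proj ((j : ℕ) + 1) k)ᴴ).det.re) ^ (delta a j)

/-- Complex relative determinant for integral weights. -/
def relDetC {k : ℕ} (a : Fin k → ℕ) (X : Matrix (Fin k) (Fin k) ℂ) : ℂ :=
  ∏ j : Fin k,
    ((proj ((j : ℕ) + 1) k * X * (proj ((j : ℕ) + 1) k)ᴴ).det) ^ (deltaNat a j)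

/-- The completely positive map `T(X) = Σ A_i X A_i†` with Kraus operators `A i`. -/
def cpMap {ι κ : Type*} [Fintype ι] {r : ℕ} (A : Fin r → Matrix κ ι ℂ)
    (X : Matrix ι ι ℂ) : Matrix κ κ ℂ :=
  ∑ i, A i * X * (A i)ᴴ

/-- The dual completely positive map `T*(Y) = Σ A_i† Y A_i`. -/
def cpDual {ι κ : Type*} [Fintype κ] {r : ℕ} (A : Fin r → Matrix κ ι ℂ)
    (Y : Matrix κ κ ℂ) : Matrix ι ι ℂ :=
  ∑ i, (A i)ᴴ * Y * A i

/-- Frobenius norm `‖A‖ = √(Tr A Aᴴ)`. -/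
def frob {ι κ : Type*} [Fintype ι] [Fintype κ] (A : Matrix ι κ ℂ) : ℝ :=
  Real.sqrt (A * Aᴴ).trace.re

/-- Upper triangular predicate. -/
def UT {k : ℕ} (g : Matrix (Fin k) (Fin k) ℂ) : Prop :=
  ∀ i j : Fin k, j < i → g i j = 0

/-- Capacity with specified marginals:
`cap(T,P,Q) = inf over invertible upper triangular h of det(Q, T(hPh†)) / det(P, h†h)`. -/
def cap {n m r : ℕ} (A : Fin r → Matrix (Fin m) (Fin n) ℂ)
    (p : Fin n → ℝ) (q : Fin m → ℝ) : ℝ :=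
  sInf { x : ℝ | ∃ h : Matrix (Fin n) (Fin n) ℂ, IsUnit h.det ∧ UT h ∧
    x = relDet q (cpMap A (h * Matrix.diagonal (fun j => (p j : ℂ)) * hᴴ)) /
        relDet p (hᴴ * h) }

/-- Span of the first `i` standard basis vectors of `ℂ^k`. -/
def coordSub (k i : ℕ) : Submodule ℂ (Fin k → ℂ) where
  carrier := { x | ∀ l : Fin k, i ≤ (l : ℕ) → x l = 0 }
  add_mem' := by intro a b ha hb l hl; simp [ha l hl, hb l hl]
  zero_mem' := by intro l _; rfl
  smul_mem' := by intro c x hx l hl; simp [hx l hl]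

/-- `(L, R)` is a `T`-independent pair: `A_i R ⊥ L` for all `i`. -/
def TIndep {n m r : ℕ} (A : Fin r → Matrix (Fin m) (Fin n) ℂ)
    (L : Submodule ℂ (Fin m → ℂ)) (R : Submodule ℂ (Fin n → ℂ)) : Prop :=
  ∀ i : Fin r, ∀ x ∈ R, ∀ y ∈ L, star y ⬝ᵥ (A i).mulVec x = 0

/-- `(P,Q)`-rank-nondecreasingness. -/
def rankNonDec {n m r : ℕ} (A : Fin r → Matrix (Fin m) (Fin n) ℂ)
    (p : Fin n → ℝ) (q : Fin m → ℝ) : Prop :=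
  ∀ L : Submodule ℂ (Fin m → ℂ), ∀ R : Submodule ℂ (Fin n → ℂ), TIndep A L R →
    (∑ i : Fin m, delta q i * (Module.finrank ℂ ↥(coordSub m ((i : ℕ) + 1) ⊓ L) : ℝ)) +
      (∑ j : Fin n, delta p j * (Module.finrank ℂ ↥(coordSub n ((j : ℕ) + 1) ⊓ R) : ℝ))
      ≤ ∑ j, p j

/-- `λ'_{i+1}`: number of parts of `lam` that are `> i` (0-indexed conjugate partition). -/
def conj' {k : ℕ} (lam : Fin k → ℕ) (i : ℕ) : ℕ :=
  (Finset.univ.filter fun j : Fin k => i < lam j).card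

lemma conj'_le {k : ℕ} (lam : Fin k → ℕ) (i : ℕ) : conj' lam i ≤ k := by
  classical
  calc conj' lam i ≤ Finset.univ.card := Finset.card_filter_le _ _
    _ = k := by simp

/-- Index set for the blocks of `G_λ`; it has cardinality `Σ_i λ'_i = Σ_j λ_j`. -/
abbrev lamIdx {k : ℕ} (lam : Fin k → ℕ) : Type :=
  Σ i : Fin (Finset.univ.sup lam), Fin (conj' lam (i : ℕ))

/-- The gadget map `G_λ(X) = ⊕_{i=1}^{λ_1} η_{λ'_i} X η_{λ'_i}†`. -/
def Gmap {k : ℕ} (lam : Fin k → ℕ) (X : Matrix (Fin k) (Fin k) ℂ) :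
    Matrix (lamIdx lam) (lamIdx lam) ℂ := fun s t =>
  if s.1 = t.1 then
    X (Fin.castLE (conj'_le lam (s.1 : ℕ)) s.2) (Fin.castLE (conj'_le lam (t.1 : ℕ)) t.2)
  else 0

/-- The adjoint `G_λ*` of the gadget map with respect to the trace inner product. -/
def GmapAdj {k : ℕ} (lam : Fin k → ℕ) (Y : Matrix (lamIdx lam) (lamIdx lam) ℂ) :
    Matrix (Fin k) (Fin k) ℂ := fun a b =>
  ∑ i : Fin (Finset.univ.sup lam),
    if h : (a : ℕ) < conj' lam (i : ℕ) ∧ (b : ℕ) < conj' lam (i : ℕ) then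
      Y ⟨i, ⟨(a : ℕ), h.1⟩⟩ ⟨i, ⟨(b : ℕ), h.2⟩⟩
    else 0

/-- The reduction `trun_{P,Q} T = G_q ∘ T ∘ G_p*`. -/
def trun {n m r : ℕ} (A : Fin r → Matrix (Fin m) (Fin n) ℂ) (p : Fin n → ℕ) (q : Fin m → ℕ)
    (X : Matrix (lamIdx p) (lamIdx p) ℂ) : Matrix (lamIdx q) (lamIdx q) ℂ :=
  Gmap q (cpMap A (GmapAdj p X))

/-- The dual of the reduction: `(trun_{P,Q} T)* = G_p ∘ T* ∘ G_q*`. -/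
def trunDual {n m r : ℕ} (A : Fin r → Matrix (Fin m) (Fin n) ℂ) (p : Fin n → ℕ) (q : Fin m → ℕ)
    (Y : Matrix (lamIdx q) (lamIdx q) ℂ) : Matrix (lamIdx p) (lamIdx p) ℂ :=
  Gmap p (cpDual A (GmapAdj q Y))

/-- Shannon entropy with convention `0 · log 0 = 0` (note `Real.log 0 = 0`). -/
def entropy {k : ℕ} (p : Fin k → ℝ) : ℝ := -∑ j, p j * Real.log (p j)

/-- The distance-to-target measure `ds_{P,Q}(T)`. -/
def ds {n m r : ℕ} (A : Fin r → Matrix (Fin m) (Fin n) ℂ)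
    (p : Fin n → ℝ) (q : Fin m → ℝ) : ℝ :=
  (∑ j : Fin n, delta p j *
      (frob (proj ((j : ℕ) + 1) n *
        (cpDual A (Matrix.diagonal fun i => (q i : ℂ)) - 1) * (proj ((j : ℕ) + 1) n)ᴴ)) ^ 2) +
    ∑ i : Fin m, delta q i *
      (frob (proj ((i : ℕ) + 1) m *
        (cpMap A (Matrix.diagonal fun j => (p j : ℂ)) - 1) * (proj ((i : ℕ) + 1) m)ᴴ)) ^ 2

/-- `(u_1,…,u_n)` can be approximately put in `Q`-isotropic position with respect to `p`. -/
def approxIso {m n : ℕ} (u : Fin n → Fin m → ℂ) (p : Fin n → ℝ)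
    (Q : Matrix (Fin m) (Fin m) ℂ) : Prop :=
  ∀ ε : ℝ, 0 < ε → ∃ B : Matrix (Fin m) (Fin m) ℂ, IsUnit B.det ∧
    frob ((∑ i : Fin n,
      (((p i / ∑ a, Complex.normSq (B.mulVec (u i) a)) : ℝ) : ℂ) •
        Matrix.vecMulVec (B.mulVec (u i)) (star (B.mulVec (u i)))) - Q) ≤ ε

/-!
Writing `G_λ(X) = ∑ᵢ Kᵢ X Kᵢᴴ`, where `Kᵢ` applies `η_{λ'ᵢ}` and places the result in the `i`-th
block, `trun_{P,Q} T` is the completely positive map with Kraus operators `Kᵢ^q A_k (K_j^p)ᴴ`.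
A completely positive map with Kraus operators `B_t` is rank-nondecreasing iff
`dim V ≤ dim ∑_t B_t V` for every subspace `V`. For `trun_{P,Q} T` the image splits along the
blocks, and block `i` has dimension `dim η_{q'ᵢ} W = q'ᵢ - dim (E_{q'ᵢ} ∩ W^⊥)`, where
`W = ∑ A_k (K_j^p)ᴴ V`. Given `V`, the pair `(W^⊥, {x | ∀ k, A_k x ∈ W})` is `T`-independent; given
a `T`-independent pair `(L, R)`, the test subspace is `V = ⊕ⱼ η_{p'ⱼ}(F_{p'ⱼ} ∩ R)`. Finally
Abel summation, `∑ᵢ g(λ'ᵢ) = ∑ⱼ Δλⱼ g(j)`, turns the block sums into the weighted sums of the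
`(P,Q)`-condition.
-/

namespace Trun

open Module Submodule Matrix

section Perp

variable {𝕜 : Type*} [RCLike 𝕜] {k : ℕ}

def perp (U : Submodule 𝕜 (Fin k → 𝕜)) : Submodule 𝕜 (Fin k → 𝕜) :=
  (U.map (WithLp.linearEquiv 2 𝕜 (Fin k → 𝕜)).symm.toLinearMap)ᗮ.map
    (WithLp.linearEquiv 2 𝕜 (Fin k → 𝕜)).toLinearMap

theorem mem_perp {U : Submodule 𝕜 (Fin k → 𝕜)} {x : Fin k → 𝕜} :
    x ∈ perp U ↔ ∀ u ∈ U, star u ⬝ᵥ x = 0 := by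
  simp only [perp, mem_map, mem_orthogonal, EuclideanSpace.inner_eq_star_dotProduct]
  refine ⟨?_, fun h => ⟨WithLp.toLp 2 x, ?_, rfl⟩⟩
  · rintro ⟨x, hx, rfl⟩ u hu
    simpa [dotProduct_comm] using hx _ ⟨u, hu, rfl⟩
  · rintro _ ⟨u, hu, rfl⟩
    simpa [dotProduct_comm] using h u hu

theorem finrank_perp_add (U : Submodule 𝕜 (Fin k → 𝕜)) :
    finrank 𝕜 (perp U) + finrank 𝕜 U = k := by
  have h := (U.map (WithLp.linearEquiv 2 𝕜 (Fin k → 𝕜)).symm.toLinearMap).finrank_add_finrank_orthogonal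
  rw [LinearEquiv.finrank_map_eq, finrank_euclideanSpace_fin] at h
  rw [perp, LinearEquiv.finrank_map_eq]
  omega

theorem perp_perp (U : Submodule 𝕜 (Fin k → 𝕜)) : perp (perp U) = U := by
  rw [perp, perp, ← Submodule.map_comp]
  simp [orthogonal_orthogonal, ← Submodule.map_comp]

theorem perp_map {l : ℕ} (M : Matrix (Fin l) (Fin k) 𝕜) (U : Submodule 𝕜 (Fin k → 𝕜)) :
    perp (U.map M.mulVecLin) = (perp U).comap Mᴴ.mulVecLin := by
  ext y
  simp only [mem_perp, mem_comap, mem_map, mulVecLin_apply, forall_exists_index, and_imp,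
    forall_apply_eq_imp_iff₂]
  refine forall₂_congr fun u _ => ?_
  rw [star_mulVec, ← dotProduct_mulVec]

end Perp

section Proj

variable {c k : ℕ}

theorem sum_ite_val_eq {M : Type*} [AddCommMonoid M] (a : ℕ) (g : Fin c → M) :
    ∑ u : Fin c, (if (u : ℕ) = a then g u else 0) = if h : a < c then g ⟨a, h⟩ else 0 := by
  split_ifs with h
  · rw [Fintype.sum_eq_single ⟨a, h⟩] <;> simp +contextual [Fin.ext_iff]
  · exact Finset.sum_eq_zero fun u _ => if_neg fun hu : (u : ℕ) = a => h (hu ▸ u.isLt)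

theorem proj_mulVec_apply (x : Fin k → ℂ) (i : Fin c) (hi : (i : ℕ) < k) :
    (proj c k *ᵥ x) i = x ⟨i, hi⟩ := by
  simp [proj, mulVec, dotProduct, @eq_comm ℕ i, sum_ite_val_eq, hi]

theorem conjTranspose_proj_mulVec_apply (y : Fin c → ℂ) (a : Fin k) :
    ((proj c k)ᴴ *ᵥ y) a = if h : (a : ℕ) < c then y ⟨a, h⟩ else 0 := by
  simp [proj, mulVec, dotProduct, apply_ite (starRingEnd ℂ), sum_ite_val_eq]

theorem conjTranspose_proj_mulVec_proj_mulVec {x : Fin k → ℂ} (hx : x ∈ coordSub k c) :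
    (proj c k)ᴴ *ᵥ (proj c k *ᵥ x) = x := by
  ext a
  rw [conjTranspose_proj_mulVec_apply]
  split_ifs with h
  · exact proj_mulVec_apply x _ a.isLt
  · exact (hx a (not_lt.mp h)).symm

theorem range_conjTranspose_proj :
    LinearMap.range (proj c k)ᴴ.mulVecLin = coordSub k c := by
  refine le_antisymm ?_ fun x hx => ⟨_, conjTranspose_proj_mulVec_proj_mulVec hx⟩
  rintro _ ⟨y, rfl⟩ a ha
  simp [conjTranspose_proj_mulVec_apply, not_lt.mpr ha]

theorem injective_conjTranspose_proj (h : c ≤ k) :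
    Function.Injective (proj c k)ᴴ.mulVecLin := by
  intro y z hyz
  ext u
  simpa [conjTranspose_proj_mulVec_apply, u.isLt] using congrFun hyz (Fin.castLE h u)

theorem finrank_map_proj_perp_add (h : c ≤ k) (L : Submodule ℂ (Fin k → ℂ)) :
    finrank ℂ ((perp L).map (proj c k).mulVecLin) + finrank ℂ ↥(coordSub k c ⊓ L) = c := by
  have hsum := finrank_perp_add ((perp L).map (proj c k).mulVecLin)
  rw [perp_map, perp_perp] at hsum
  have hcomap : finrank ℂ (L.comap (proj c k)ᴴ.mulVecLin) = finrank ℂ ↥(coordSub k c ⊓ L) := by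
    rw [← range_conjTranspose_proj, ← map_comap_eq]
    exact (equivMapOfInjective _ (injective_conjTranspose_proj h) _).finrank_eq
  omega

theorem finrank_map_proj_of_le {U : Submodule ℂ (Fin k → ℂ)} (hU : U ≤ coordSub k c) :
    finrank ℂ (U.map (proj c k).mulVecLin) = finrank ℂ U := by
  refine le_antisymm (finrank_map_le _ _) ?_
  have hU' : (U.map (proj c k).mulVecLin).map (proj c k)ᴴ.mulVecLin = U := by
    ext x
    simp only [mem_map, mulVecLin_apply]
    constructor
    · rintro ⟨_, ⟨u, hu, rfl⟩, rfl⟩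
      rwa [conjTranspose_proj_mulVec_proj_mulVec (hU hu)]
    · exact fun hx => ⟨_, ⟨x, hx, rfl⟩, conjTranspose_proj_mulVec_proj_mulVec (hU hx)⟩
  calc finrank ℂ U = finrank ℂ ((U.map (proj c k).mulVecLin).map (proj c k)ᴴ.mulVecLin) := by
        rw [hU']
    _ ≤ _ := finrank_map_le _ _

theorem coordSub_zero (k : ℕ) : coordSub k 0 = ⊥ :=
  eq_bot_iff.mpr fun _ hx => (mem_bot ℂ).mpr (funext fun l => hx l (Nat.zero_le _))

end Proj

section Blocks

variable (K : Type*) [Field K] {ι : Type*} {β : ι → Type*}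

def blockIncl [DecidableEq ι] (i : ι) : (β i → K) →ₗ[K] ((Σ i, β i) → K) :=
  (LinearEquiv.piCurry K fun _ _ => K).symm.toLinearMap ∘ₗ LinearMap.single K (fun i => β i → K) i

def blockProj (i : ι) : ((Σ i, β i) → K) →ₗ[K] (β i → K) :=
  LinearMap.funLeft K K (Sigma.mk i)

variable {K}

theorem finrank_pi_univ [Fintype ι] {V : ι → Type*} [∀ i, AddCommGroup (V i)]
    [∀ i, Module K (V i)] [∀ i, FiniteDimensional K (V i)] (U : ∀ i, Submodule K (V i)) :
    finrank K (pi Set.univ U) = ∑ i, finrank K (U i) := by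
  have hrange : LinearMap.range (LinearMap.piMap fun i => (U i).subtype) = pi Set.univ U := by
    ext x
    simp only [LinearMap.mem_range, mem_pi, Set.mem_univ, true_implies]
    refine ⟨?_, fun hx => ⟨fun i => ⟨x i, hx i⟩, rfl⟩⟩
    rintro ⟨y, rfl⟩ i
    exact (y i).2
  rw [← hrange, LinearMap.finrank_range_of_inj, finrank_pi_fintype]
  intro y z hyz
  funext i
  exact Subtype.ext (congrFun hyz i)

theorem blockProj_blockIncl_self [DecidableEq ι] (i : ι) (z : β i → K) :
    blockProj K i (blockIncl K i z) = z := by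
  ext u
  simp [blockProj, blockIncl, LinearMap.funLeft, Sigma.uncurry]

theorem blockProj_blockIncl_of_ne [DecidableEq ι] {i j : ι} (h : i ≠ j) (z : β j → K) :
    blockProj K i (blockIncl K j z) = 0 := by
  ext u
  simp [blockProj, blockIncl, LinearMap.funLeft, Sigma.uncurry, h]

theorem finrank_iSup_map_blockIncl [Fintype ι] [DecidableEq ι] [∀ i, Fintype (β i)]
    (U : ∀ i, Submodule K (β i → K)) :
    finrank K ↥(⨆ i, (U i).map (blockIncl K i)) = ∑ i, finrank K (U i) := by
  have hblocks : ⨆ i, (U i).map (blockIncl K i) =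
      (pi Set.univ U).map (LinearEquiv.piCurry K fun (i : ι) (_ : β i) => K).symm.toLinearMap := by
    rw [← iSup_map_single, Submodule.map_iSup]
    simp only [blockIncl, map_comp]
  rw [hblocks, LinearEquiv.finrank_map_eq, finrank_pi_univ]

theorem finrank_le_sum_finrank_map_blockProj [Fintype ι] [∀ i, Fintype (β i)]
    (V : Submodule K ((Σ i, β i) → K)) :
    finrank K V ≤ ∑ i, finrank K (V.map (blockProj K i)) := by
  rw [← finrank_pi_univ, ← LinearEquiv.finrank_map_eq (LinearEquiv.piCurry K fun _ _ => K) V]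
  refine finrank_mono ?_
  rintro _ ⟨v, hv, rfl⟩ i -
  exact ⟨v, hv, rfl⟩

end Blocks

section ConjugatePartition

variable {k : ℕ}

theorem lt_conj'_iff {a : Fin k → ℕ} (ha : Antitone a) (t : Fin k) (i : ℕ) :
    (t : ℕ) < conj' a i ↔ i < a t := by
  constructor
  · intro ht
    by_contra! hat
    have hsub : Finset.univ.filter (fun j => i < a j) ⊆ Finset.Iio t := fun j hj => by
      simp only [Finset.mem_filter, Finset.mem_univ, true_and] at hj
      exact Finset.mem_Iio.mpr (lt_of_not_ge fun htj => absurd (ha htj) (by omega))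
    have := Finset.card_le_card hsub
    rw [Fin.card_Iio] at this
    exact absurd ht (by rw [conj']; omega)
  · intro hit
    have hsub : Finset.Iic t ⊆ Finset.univ.filter (fun j => i < a j) := fun j hj => by
      simp only [Finset.mem_filter, Finset.mem_univ, true_and]
      exact lt_of_lt_of_le hit (ha (Finset.mem_Iic.mp hj))
    have := Finset.card_le_card hsub
    rw [Fin.card_Iic] at this
    rw [conj']
    omega

theorem card_filter_val_lt_sup (a : Fin k → ℕ) (t : Fin k) :
    (Finset.univ.filter fun i : Fin (Finset.univ.sup a) => (i : ℕ) < a t).card = a t := by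
  rw [Fin.card_filter_val_lt, min_eq_right (Finset.le_sup (Finset.mem_univ t))]

theorem sum_conj' (a : Fin k → ℕ) :
    ∑ i : Fin (Finset.univ.sup a), conj' a i = ∑ t, a t := by
  simp only [conj', Finset.card_filter]
  rw [Finset.sum_comm]
  refine Finset.sum_congr rfl fun t _ => ?_
  rw [← Finset.card_filter, card_filter_val_lt_sup]

theorem sum_delta_mul (a : Fin k → ℝ) (g : ℕ → ℝ) (hg : g 0 = 0) :
    ∑ j, delta a j * g (j + 1) = ∑ j, a j * (g (j + 1) - g j) := by
  set b : ℕ → ℝ := fun t => if h : t < k then a ⟨t, h⟩ else 0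
  have hdelta : ∀ j : Fin k, delta a j = b j - b (j + 1) := fun j => by simp [delta, b, j.isLt]
  have ha : ∀ j : Fin k, a j = b j := fun j => by simp [b, j.isLt]
  simp only [hdelta, ha]
  rw [Fin.sum_univ_eq_sum_range (fun t => (b t - b (t + 1)) * g (t + 1)),
    Fin.sum_univ_eq_sum_range (fun t => b t * (g (t + 1) - g t)), ← sub_eq_zero,
    ← Finset.sum_sub_distrib]
  calc _ = -∑ t ∈ Finset.range k, (b (t + 1) * g (t + 1) - b t * g t) := by
        rw [← Finset.sum_neg_distrib]
        exact Finset.sum_congr rfl fun t _ => by ring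
    _ = 0 := by rw [Finset.sum_range_sub (fun t => b t * g t)]; simp [b, hg]

theorem sum_comp_conj' {a : Fin k → ℕ} (ha : Antitone a) (g : ℕ → ℝ) (hg : g 0 = 0) :
    ∑ i : Fin (Finset.univ.sup a), g (conj' a i) =
      ∑ j, delta (fun j => (a j : ℝ)) j * g (j + 1) := by
  have htelescope : ∀ i : Fin (Finset.univ.sup a),
      g (conj' a i) = ∑ t : Fin k, if (i : ℕ) < a t then g (t + 1) - g t else 0 := by
    intro i
    simp_rw [← lt_conj'_iff ha]
    have hrange : (Finset.range k).filter (· < conj' a i) = Finset.range (conj' a i) := by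
      ext t
      simpa using fun ht => ht.trans_le (conj'_le a i)
    rw [Fin.sum_univ_eq_sum_range (fun t => if t < conj' a i then g (t + 1) - g t else 0),
      ← Finset.sum_filter, hrange, Finset.sum_range_sub, hg, sub_zero]
  simp_rw [htelescope, sum_delta_mul _ g hg]
  rw [Finset.sum_comm]
  refine Finset.sum_congr rfl fun t _ => ?_
  rw [← Finset.sum_filter, Finset.sum_const, card_filter_val_lt_sup, nsmul_eq_mul]

end ConjugatePartition

section KrausImage

variable {𝕜 : Type*} [RCLike 𝕜] {ι κ σ : Type*} [Fintype ι]

def krausImage (B : σ → Matrix κ ι 𝕜) (V : Submodule 𝕜 (ι → 𝕜)) : Submodule 𝕜 (κ → 𝕜) :=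
  ⨆ t, V.map (B t).mulVecLin

theorem krausImage_prod_mul [Fintype κ] {μ τ : Type*} [Fintype τ] (C : τ → Matrix μ κ 𝕜)
    (D : σ → Matrix κ ι 𝕜) (V : Submodule 𝕜 (ι → 𝕜)) :
    krausImage (fun t : τ × σ => C t.1 * D t.2) V = ⨆ i, (krausImage D V).map (C i).mulVecLin := by
  simp only [krausImage, Submodule.map_iSup, iSup_prod, mulVecLin_mul, map_comp]

theorem rank_sum_mul_mul_conjTranspose [Fintype κ] [Fintype σ] {τ : Type*} [Fintype τ]
    (B : σ → Matrix κ ι 𝕜) (M : Matrix ι τ 𝕜) :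
    (∑ t, B t * (M * Mᴴ) * (B t)ᴴ).rank =
      finrank 𝕜 (krausImage B (LinearMap.range M.mulVecLin)) := by
  -- `N` is the block row `[B₁M ⋯ BₛM]`, so that `N Nᴴ` is the sum on the left.
  let N : Matrix κ (σ × τ) 𝕜 := of fun a tb => (B tb.1 * M) a tb.2
  have hN : N * Nᴴ = ∑ t, B t * (M * Mᴴ) * (B t)ᴴ := by
    have hterm : ∀ t, B t * (M * Mᴴ) * (B t)ᴴ = (B t * M) * (B t * M)ᴴ := fun t => by
      simp only [conjTranspose_mul, Matrix.mul_assoc]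
    ext a c
    simp only [hterm, N, mul_apply, Matrix.sum_apply, Fintype.sum_prod_type, conjTranspose_apply,
      of_apply]
  have hcols : Set.range N.col = ⋃ t, Set.range (B t * M).col := by
    ext x
    simp only [Set.mem_range, Set.mem_iUnion, Prod.exists]
    rfl
  have hspan : ∀ t, span 𝕜 (Set.range (B t * M).col) =
      (LinearMap.range M.mulVecLin).map (B t).mulVecLin := fun t => by
    rw [← range_mulVecLin, mulVecLin_mul, LinearMap.range_comp]
  rw [← hN, rank_self_mul_conjTranspose, rank, range_mulVecLin, hcols, span_iUnion, krausImage,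
    iSup_congr hspan]

theorem rank_le_rank_kraus_iff [Fintype κ] [Fintype σ] [DecidableEq ι] (B : σ → Matrix κ ι 𝕜) :
    (∀ X : Matrix ι ι 𝕜, X.PosSemidef → X.rank ≤ (∑ t, B t * X * (B t)ᴴ).rank) ↔
      ∀ V : Submodule 𝕜 (ι → 𝕜), finrank 𝕜 V ≤ finrank 𝕜 (krausImage B V) := by
  have hrank_iff : ∀ M : Matrix ι ι 𝕜, (M * Mᴴ).rank ≤ (∑ t, B t * (M * Mᴴ) * (B t)ᴴ).rank ↔
      finrank 𝕜 (LinearMap.range M.mulVecLin) ≤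
        finrank 𝕜 (krausImage B (LinearMap.range M.mulVecLin)) := fun M => by
    rw [rank_self_mul_conjTranspose, rank, rank_sum_mul_mul_conjTranspose]
  constructor
  · intro h V
    obtain ⟨W, hW⟩ := V.exists_isCompl
    have hV : LinearMap.range (LinearMap.toMatrix' (V.subtype ∘ₗ V.projectionOnto W hW)).mulVecLin
        = V := by
      rw [← Matrix.toLin'_apply', Matrix.toLin'_toMatrix', LinearMap.range_comp,
        range_projectionOnto, map_subtype_top]
    rw [← hV, ← hrank_iff]
    exact h _ (posSemidef_self_mul_conjTranspose _)
  · intro h X hX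
    open scoped MatrixOrder in
    obtain ⟨C, rfl⟩ := CStarAlgebra.nonneg_iff_eq_star_mul_self.mp hX.nonneg
    rw [star_eq_conjTranspose, ← conjTranspose_conjTranspose C, conjTranspose_conjTranspose Cᴴ, hrank_iff]
    exact h _

end KrausImage

section Gadget

variable {k : ℕ} (lam : Fin k → ℕ)

def gadgetKraus (i : Fin (Finset.univ.sup lam)) : Matrix (lamIdx lam) (Fin k) ℂ :=
  Matrix.of fun s a => if s.1 = i ∧ Fin.castLE (conj'_le lam s.1) s.2 = a then 1 else 0

theorem conjTranspose_gadgetKraus (i : Fin (Finset.univ.sup lam)) :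
    (gadgetKraus lam i)ᴴ = (gadgetKraus lam i)ᵀ := by
  ext a s
  simp [gadgetKraus, apply_ite (starRingEnd ℂ)]

theorem sum_gadgetKraus_mul (i : Fin (Finset.univ.sup lam)) (a : Fin k) (f : lamIdx lam → ℂ) :
    ∑ s, gadgetKraus lam i s a * f s =
      if h : (a : ℕ) < conj' lam i then f ⟨i, ⟨a, h⟩⟩ else 0 := by
  rw [Fintype.sum_sigma, Finset.sum_eq_single i (fun j _ hj => by simp [gadgetKraus, hj])
    (by simp)]
  simp [gadgetKraus, Fin.ext_iff, sum_ite_val_eq]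

theorem Gmap_eq_sum (X : Matrix (Fin k) (Fin k) ℂ) :
    Gmap lam X = ∑ i, gadgetKraus lam i * X * (gadgetKraus lam i)ᴴ := by
  ext s t
  simp [Gmap, gadgetKraus, mul_apply, Matrix.sum_apply, ite_and, apply_ite (starRingEnd ℂ),
    eq_comm]

theorem GmapAdj_eq_sum (Y : Matrix (lamIdx lam) (lamIdx lam) ℂ) :
    GmapAdj lam Y = ∑ i, (gadgetKraus lam i)ᴴ * Y * gadgetKraus lam i := by
  ext a b
  rw [GmapAdj, Matrix.sum_apply]
  refine Finset.sum_congr rfl fun i _ => ?_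
  simp only [conjTranspose_gadgetKraus, mul_apply, transpose_apply, sum_gadgetKraus_mul]
  simp_rw [mul_comm _ (gadgetKraus lam i _ b), sum_gadgetKraus_mul]
  split_ifs <;> simp_all

theorem gadgetKraus_mulVecLin (i : Fin (Finset.univ.sup lam)) :
    (gadgetKraus lam i).mulVecLin = blockIncl ℂ i ∘ₗ (proj (conj' lam i) k).mulVecLin := by
  refine LinearMap.ext fun x => funext fun ⟨j, u⟩ => ?_
  by_cases hj : j = i
  · subst hj
    simp only [gadgetKraus, blockIncl, mulVecLin_apply, mulVec, dotProduct, of_apply, true_and,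
      ite_mul, one_mul, zero_mul, Finset.sum_ite_eq, Finset.mem_univ, if_true,
      LinearMap.coe_comp, LinearEquiv.coe_coe, LinearMap.coe_single, Function.comp_apply,
      LinearEquiv.piCurry_symm_apply, Sigma.uncurry, Pi.single_eq_same]
    exact (proj_mulVec_apply x u _).symm
  · simp [gadgetKraus, blockIncl, mulVec, dotProduct, Sigma.uncurry, hj]

theorem conjTranspose_gadgetKraus_mulVecLin (i : Fin (Finset.univ.sup lam)) :
    (gadgetKraus lam i)ᴴ.mulVecLin = (proj (conj' lam i) k)ᴴ.mulVecLin ∘ₗ blockProj ℂ i := by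
  refine LinearMap.ext fun y => funext fun a => ?_
  rw [LinearMap.comp_apply, mulVecLin_apply, mulVecLin_apply, conjTranspose_proj_mulVec_apply,
    conjTranspose_gadgetKraus, mulVec, dotProduct]
  simp only [transpose_apply, sum_gadgetKraus_mul]
  rfl

theorem finrank_map_conjTranspose_gadgetKraus (j : Fin (Finset.univ.sup lam))
    (V : Submodule ℂ (lamIdx lam → ℂ)) :
    finrank ℂ (V.map (gadgetKraus lam j)ᴴ.mulVecLin) = finrank ℂ (V.map (blockProj ℂ j)) := by
  rw [conjTranspose_gadgetKraus_mulVecLin, map_comp]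
  exact (equivMapOfInjective _ (injective_conjTranspose_proj (conj'_le lam j)) _).finrank_eq.symm

theorem map_conjTranspose_gadgetKraus_iSup_le
    (U : Fin (Finset.univ.sup lam) → Submodule ℂ (Fin k → ℂ))
    (hU : ∀ i, U i ≤ coordSub k (conj' lam i)) (j : Fin (Finset.univ.sup lam)) :
    (⨆ i, ((U i).map (proj (conj' lam i) k).mulVecLin).map (blockIncl ℂ i)).map
      (gadgetKraus lam j)ᴴ.mulVecLin ≤ U j := by
  rw [Submodule.map_iSup]
  refine iSup_le fun i => ?_
  rintro _ ⟨_, ⟨_, ⟨x, hx, rfl⟩, rfl⟩, rfl⟩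
  rw [conjTranspose_gadgetKraus_mulVecLin, LinearMap.comp_apply]
  by_cases hij : j = i
  · subst hij
    rw [blockProj_blockIncl_self, mulVecLin_apply, mulVecLin_apply,
      conjTranspose_proj_mulVec_proj_mulVec (hU j hx)]
    exact hx
  · rw [blockProj_blockIncl_of_ne hij, map_zero]
    exact zero_mem _

theorem sum_finrank_map_proj_perp_add (L : Submodule ℂ (Fin k → ℂ)) :
    ∑ i : Fin (Finset.univ.sup lam), finrank ℂ ((perp L).map (proj (conj' lam i) k).mulVecLin) +
      ∑ i : Fin (Finset.univ.sup lam), finrank ℂ ↥(coordSub k (conj' lam i) ⊓ L) = ∑ j, lam j := by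
  rw [← Finset.sum_add_distrib, ← sum_conj' lam]
  exact Finset.sum_congr rfl fun i _ => finrank_map_proj_perp_add (conj'_le lam i) L

end Gadget

section Truncation

variable {n m r : ℕ} (A : Fin r → Matrix (Fin m) (Fin n) ℂ) (p : Fin n → ℕ) (q : Fin m → ℕ)

def adjGadgetKraus (s : Fin r × Fin (Finset.univ.sup p)) : Matrix (Fin m) (lamIdx p) ℂ :=
  A s.1 * (gadgetKraus p s.2)ᴴ

def trunKraus (t : Fin (Finset.univ.sup q) × Fin r × Fin (Finset.univ.sup p)) :
    Matrix (lamIdx q) (lamIdx p) ℂ :=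
  gadgetKraus q t.1 * adjGadgetKraus A p t.2

def RankNonDecConj : Prop :=
  ∀ L R, TIndep A L R →
    ∑ i : Fin (Finset.univ.sup q), finrank ℂ ↥(coordSub m (conj' q i) ⊓ L) +
      ∑ j : Fin (Finset.univ.sup p), finrank ℂ ↥(coordSub n (conj' p j) ⊓ R) ≤ ∑ j, p j

theorem trun_eq_sum (X : Matrix (lamIdx p) (lamIdx p) ℂ) :
    trun A p q X = ∑ t, trunKraus A p q t * X * (trunKraus A p q t)ᴴ := by
  simp only [trun, Gmap_eq_sum, GmapAdj_eq_sum, cpMap, trunKraus, adjGadgetKraus, Matrix.mul_sum,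
    Matrix.sum_mul, Fintype.sum_prod_type, conjTranspose_mul, conjTranspose_conjTranspose,
    Matrix.mul_assoc]

theorem finrank_krausImage_trunKraus (V : Submodule ℂ (lamIdx p → ℂ)) :
    finrank ℂ (krausImage (trunKraus A p q) V) =
      ∑ i : Fin (Finset.univ.sup q),
        finrank ℂ ((krausImage (adjGadgetKraus A p) V).map (proj (conj' q i) m).mulVecLin) := by
  rw [show trunKraus A p q = fun t => gadgetKraus q t.1 * adjGadgetKraus A p t.2 from rfl,
    krausImage_prod_mul, iSup_congr fun i => by rw [gadgetKraus_mulVecLin, map_comp]]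
  exact finrank_iSup_map_blockIncl _

theorem rankNonDec_iff_rankNonDecConj (hp : Antitone p) (hq : Antitone q) :
    rankNonDec A (fun j => (p j : ℝ)) (fun i => (q i : ℝ)) ↔ RankNonDecConj A p q := by
  have hconj : ∀ {k : ℕ} {a : Fin k → ℕ}, Antitone a → ∀ U : Submodule ℂ (Fin k → ℂ),
      ∑ j, delta (fun j => (a j : ℝ)) j * (finrank ℂ ↥(coordSub k (j + 1) ⊓ U) : ℝ) =
        ∑ i : Fin (Finset.univ.sup a), (finrank ℂ ↥(coordSub k (conj' a i) ⊓ U) : ℝ) :=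
    fun ha U => (sum_comp_conj' ha (fun t => (finrank ℂ ↥(coordSub _ t ⊓ U) : ℝ))
      (by simp [coordSub_zero])).symm
  refine forall₂_congr fun L R => imp_congr_right fun _ => ?_
  rw [hconj hq, hconj hp]
  simp only [← Nat.cast_sum, ← Nat.cast_add, Nat.cast_le]

theorem rankNonDecConj_of_finrank_le (hpq : ∑ j, p j = ∑ i, q i)
    (hrank : ∀ V : Submodule ℂ (lamIdx p → ℂ), finrank ℂ V ≤ finrank ℂ (krausImage (trunKraus A p q) V)) :
    RankNonDecConj A p q := by
  intro L R hLR
  set V : Submodule ℂ (lamIdx p → ℂ) := ⨆ j : Fin (Finset.univ.sup p),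
    ((coordSub n (conj' p j) ⊓ R).map (proj (conj' p j) n).mulVecLin).map (blockIncl ℂ j)
  have hV : finrank ℂ V =
      ∑ j : Fin (Finset.univ.sup p), finrank ℂ ↥(coordSub n (conj' p j) ⊓ R) := by
    rw [finrank_iSup_map_blockIncl]
    exact Finset.sum_congr rfl fun j _ => finrank_map_proj_of_le inf_le_left
  have himage : krausImage (adjGadgetKraus A p) V ≤ perp L := by
    refine iSup_le fun s => ?_
    rintro _ ⟨v, hv, rfl⟩
    have hvR : (gadgetKraus p s.2)ᴴ *ᵥ v ∈ R :=
      (map_conjTranspose_gadgetKraus_iSup_le p _ (fun _ => inf_le_left) s.2 ⟨v, hv, rfl⟩).2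
    rw [mulVecLin_apply, adjGadgetKraus, ← mulVec_mulVec]
    exact mem_perp.mpr fun y hy => hLR s.1 _ hvR y hy
  have hbound : finrank ℂ (krausImage (trunKraus A p q) V) ≤
      ∑ i : Fin (Finset.univ.sup q), finrank ℂ ((perp L).map (proj (conj' q i) m).mulVecLin) := by
    rw [finrank_krausImage_trunKraus]
    exact Finset.sum_le_sum fun i _ => finrank_mono (map_mono himage)
  have hsum := sum_finrank_map_proj_perp_add q L
  have := hrank V
  omega

theorem finrank_le_of_rankNonDecConj (hpq : ∑ j, p j = ∑ i, q i)
    (hRN : RankNonDecConj A p q) (V : Submodule ℂ (lamIdx p → ℂ)) :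
    finrank ℂ V ≤ finrank ℂ (krausImage (trunKraus A p q) V) := by
  rw [finrank_krausImage_trunKraus]
  set W := krausImage (adjGadgetKraus A p) V
  set R := ⨅ i, W.comap (A i).mulVecLin
  have hLR : TIndep A (perp W) R := fun i x hx => by
    have hx' : A i *ᵥ x ∈ perp (perp W) := by
      rw [perp_perp]
      exact mem_iInf _ |>.mp hx i
    exact mem_perp.mp hx'
  have hblock : ∀ j : Fin (Finset.univ.sup p),
      V.map (gadgetKraus p j)ᴴ.mulVecLin ≤ coordSub n (conj' p j) ⊓ R := by
    rintro j _ ⟨v, hv, rfl⟩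
    refine ⟨?_, mem_iInf _ |>.mpr fun i => ?_⟩
    · rw [← range_conjTranspose_proj, conjTranspose_gadgetKraus_mulVecLin]
      exact LinearMap.mem_range_self _ _
    · refine mem_iSup_of_mem (i, j) ⟨v, hv, ?_⟩
      simp [adjGadgetKraus, mulVec_mulVec]
  have hV : finrank ℂ V ≤
      ∑ j : Fin (Finset.univ.sup p), finrank ℂ ↥(coordSub n (conj' p j) ⊓ R) :=
    calc finrank ℂ V ≤ ∑ j, finrank ℂ (V.map (blockProj ℂ j)) :=
          finrank_le_sum_finrank_map_blockProj V
      _ = ∑ j, finrank ℂ (V.map (gadgetKraus p j)ᴴ.mulVecLin) :=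
          Finset.sum_congr rfl fun j _ => (finrank_map_conjTranspose_gadgetKraus p j V).symm
      _ ≤ _ := Finset.sum_le_sum fun j _ => finrank_mono (hblock j)
  have hsum := sum_finrank_map_proj_perp_add q (perp W)
  rw [perp_perp] at hsum
  have := hRN _ _ hLR
  omega

end Truncation

end Trun

theorem stmt4_general {n m r N : ℕ} (A : Fin r → Matrix (Fin m) (Fin n) ℂ)
    (p : Fin n → ℕ) (q : Fin m → ℕ)
    (hp : Antitone p) (hq : Antitone q)
    (hpN : ∑ j, p j = N) (hqN : ∑ i, q i = N) :
    (∀ X : Matrix (lamIdx p) (lamIdx p) ℂ, X.PosSemidef → X.rank ≤ (trun A p q X).rank)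
      ↔ rankNonDec A (fun j => (p j : ℝ)) (fun i => (q i : ℝ)) := by
  have hpq : ∑ j, p j = ∑ i, q i := hpN.trans hqN.symm
  simp_rw [Trun.trun_eq_sum]
  rw [Trun.rank_le_rank_kraus_iff, Trun.rankNonDec_iff_rankNonDecConj A p q hp hq]
  exact ⟨Trun.rankNonDecConj_of_finrank_le A p q hpq, Trun.finrank_le_of_rankNonDecConj A p q hpq⟩

/-- Theorem: for integral marginals, `trun_{P,Q} T` is rank-nondecreasing (Gurvits' sense)
iff `T` is `(P,Q)`-rank-nondecreasing. -/
theorem stmt4 {n m r N : ℕ} (A : Fin r → Matrix (Fin m) (Fin n) ℂ)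
    (p : Fin n → ℕ) (q : Fin m → ℕ)
    (hp : Antitone p) (hp0 : ∀ j, 0 < p j) (hq : Antitone q) (hq0 : ∀ i, 0 < q i)
    (hpN : ∑ j, p j = N) (hqN : ∑ i, q i = N) :
    (∀ X : Matrix (lamIdx p) (lamIdx p) ℂ, X.PosSemidef → X.rank ≤ (trun A p q X).rank)
      ↔ rankNonDec A (fun j => (p j : ℝ)) (fun i => (q i : ℝ)) :=
  stmt4_general A p q hp hq hpN hqN
end
end

section
/- For any partition λ = (λ_1 ≥ … ≥ λ_k > 0) of l, the map G_λ : Mat_k(ℂ) → Mat_l(ℂ) is an injective linear map satisfying: (a) G_λ(I_k) = I_l and G_λ*(I_l) = diag(λ), where G_λ* is the adjoint of G_λ with respect to the trace inner product; (b) G_λ(X h) = G_λ(X) G_λ(h) for every X ∈ Mat_k(ℂ) and every upper-triangular h ∈ Mat_k(ℂ); (c) det(G_λ(X)) = det(diag(λ), X) for every X ∈ Mat_k(ℂ). -/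
open Matrix BigOperators

noncomputable section

lemma aux_sum_dite {M : Type*} [AddCommMonoid M] {c k : ℕ} (hc : c ≤ k) (g : Fin c → M) :
    (∑ t : Fin k, if h : (t : ℕ) < c then g ⟨t, h⟩ else 0) = ∑ a : Fin c, g a := by
  have h2 : ∀ a : Fin c, g a = if h : (a : ℕ) < c then g ⟨a, h⟩ else 0 := by
    intro a; rw [dif_pos a.2]
  rw [Finset.sum_congr rfl (fun a _ => h2 a),
    Fin.sum_univ_eq_sum_range (fun t => if h : t < c then g ⟨t, h⟩ else 0) k,
    Fin.sum_univ_eq_sum_range (fun t => if h : t < c then g ⟨t, h⟩ else 0) c]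
  symm
  apply Finset.sum_subset (Finset.range_subset_range.2 hc)
  intro x _ hx
  rw [Finset.mem_range, not_lt] at hx
  rw [dif_neg (by omega)]

lemma card_filter_val_lt (k m : ℕ) :
    (Finset.univ.filter fun j : Fin k => (j : ℕ) < m).card = min m k := by
  classical
  rw [Finset.card_filter, Fin.sum_univ_eq_sum_range (fun j => if j < m then 1 else 0) k,
    ← Finset.card_filter]
  have : (Finset.range k).filter (fun j => j < m) = Finset.range (min m k) := by
    ext x; simp only [Finset.mem_filter, Finset.mem_range, Finset.mem_range]; omega
  rw [this, Finset.card_range]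

lemma lt_conj'_iff {k : ℕ} {lam : Fin k → ℕ} (hanti : Antitone lam) (a : Fin k) (i : ℕ) :
    (a : ℕ) < conj' lam i ↔ i < lam a := by
  classical
  constructor
  · intro h
    by_contra hn
    push_neg at hn
    have hsub : (Finset.univ.filter fun j : Fin k => i < lam j) ⊆
        Finset.univ.filter fun j : Fin k => (j : ℕ) < (a : ℕ) := by
      intro j hj
      simp only [Finset.mem_filter, Finset.mem_univ, true_and] at hj ⊢
      by_contra hja
      push_neg at hja
      have : lam j ≤ lam a := hanti (Fin.le_def.mpr hja)
      omega
    have hc := Finset.card_le_card hsub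
    rw [card_filter_val_lt] at hc
    unfold conj' at h
    omega
  · intro h
    have hsub : (Finset.univ.filter fun j : Fin k => (j : ℕ) < (a : ℕ) + 1) ⊆
        Finset.univ.filter fun j : Fin k => i < lam j := by
      intro j hj
      simp only [Finset.mem_filter, Finset.mem_univ, true_and] at hj ⊢
      have : lam a ≤ lam j := hanti (Fin.le_def.mpr (by omega))
      omega
    have hc := Finset.card_le_card hsub
    rw [card_filter_val_lt] at hc
    have hak : (a : ℕ) < k := a.2
    unfold conj'
    omega

lemma conj'_pos {k : ℕ} {lam : Fin k → ℕ} {i : ℕ} (hi : i < Finset.univ.sup lam) :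
    0 < conj' lam i := by
  classical
  rw [Finset.lt_sup_iff] at hi
  obtain ⟨j, _, hj⟩ := hi
  exact Finset.card_pos.mpr ⟨j, by simp [hj]⟩

lemma proj_entry {k c : ℕ} (hc : c ≤ k) (X : Matrix (Fin k) (Fin k) ℂ) (a b : Fin c) :
    (proj c k * X * (proj c k)ᴴ) a b = X (Fin.castLE hc a) (Fin.castLE hc b) := by
  have hp : ∀ (a : Fin c) (s : Fin k), proj c k a s = if Fin.castLE hc a = s then 1 else 0 := by
    intro a s
    simp [proj, Fin.ext_iff]
  simp only [Matrix.mul_apply, Matrix.conjTranspose_apply, hp]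
  simp [Finset.sum_mul, ite_mul, mul_ite, Finset.sum_ite_eq, Finset.sum_ite_eq']

set_option maxHeartbeats 1000000 in
/-- Lemma (reduction gadget): for a partition `λ` of `l`, the map `G_λ` is an injective linear
(here: injective) map with `G_λ(I) = I`, its trace-inner-product adjoint `G_λ*` satisfies
`G_λ*(I) = diag λ`, it is multiplicative against upper triangular matrices on the right, and
`det(G_λ(X)) = det(diag λ, X)`. -/
theorem stmt5 {k l : ℕ} (lam : Fin k → ℕ)
    (hpos : ∀ j, 0 < lam j) (hanti : Antitone lam) (hsum : ∑ j, lam j = l) :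
    Function.Injective (Gmap lam) ∧
    Gmap lam 1 = 1 ∧
    (∀ X : Matrix (Fin k) (Fin k) ℂ, ∀ Y : Matrix (lamIdx lam) (lamIdx lam) ℂ,
      ((Gmap lam X)ᴴ * Y).trace = (Xᴴ * GmapAdj lam Y).trace) ∧
    GmapAdj lam 1 = Matrix.diagonal (fun j => ((lam j : ℕ) : ℂ)) ∧
    (∀ X h : Matrix (Fin k) (Fin k) ℂ, UT h → Gmap lam (X * h) = Gmap lam X * Gmap lam h) ∧
    (∀ X : Matrix (Fin k) (Fin k) ℂ, (Gmap lam X).det = relDetC lam X) := by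
  classical
  refine ⟨?_, ?_, ?_, ?_, ?_, ?_⟩
  · -- injectivity
    intro X Y hXY
    ext a b
    have hk : 0 < k := Nat.lt_of_le_of_lt (Nat.zero_le _) a.2
    have hN : 0 < Finset.univ.sup lam :=
      lt_of_lt_of_le (hpos ⟨0, hk⟩) (Finset.le_sup (Finset.mem_univ _))
    have ha : (a : ℕ) < conj' lam ((⟨0, hN⟩ : Fin (Finset.univ.sup lam)) : ℕ) :=
      (lt_conj'_iff hanti a 0).mpr (hpos a)
    have hb : (b : ℕ) < conj' lam ((⟨0, hN⟩ : Fin (Finset.univ.sup lam)) : ℕ) :=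
      (lt_conj'_iff hanti b 0).mpr (hpos b)
    have := congrFun (congrFun hXY ⟨⟨0, hN⟩, ⟨(a : ℕ), ha⟩⟩) ⟨⟨0, hN⟩, ⟨(b : ℕ), hb⟩⟩
    simpa [Gmap] using this
  · -- Gmap 1 = 1
    ext ⟨i, a⟩ ⟨i', b⟩
    rcases eq_or_ne i i' with rfl | hne
    · rcases eq_or_ne a b with rfl | hab
      · simp [Gmap, Matrix.one_apply]
      · have h1 : (⟨i, a⟩ : lamIdx lam) ≠ ⟨i, b⟩ := by simp [hab]
        have h2 : Fin.castLE (conj'_le lam i) a ≠ Fin.castLE (conj'_le lam i) b := by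
          intro hc
          exact hab (Fin.ext (by simpa [Fin.ext_iff] using hc))
        simp [Gmap, Matrix.one_apply, h1, h2]
    · have h1 : (⟨i, a⟩ : lamIdx lam) ≠ ⟨i', b⟩ := by simp [hne]
      simp [Gmap, hne, Matrix.one_apply, h1]
  · -- trace adjoint identity
    intro X Y
    have hL : ((Gmap lam X)ᴴ * Y).trace =
        ∑ s : lamIdx lam, ∑ t : lamIdx lam, (starRingEnd ℂ) (Gmap lam X t s) * Y t s := by
      simp [Matrix.trace, Matrix.diag, Matrix.mul_apply, Matrix.conjTranspose_apply]
    have hR : (Xᴴ * GmapAdj lam Y).trace =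
        ∑ s : Fin k, ∑ t : Fin k, (starRingEnd ℂ) (X t s) * GmapAdj lam Y t s := by
      simp [Matrix.trace, Matrix.diag, Matrix.mul_apply, Matrix.conjTranspose_apply]
    rw [hL, hR]
    have hLstep : ∀ (i : Fin (Finset.univ.sup lam)) (a : Fin (conj' lam (i : ℕ))),
        (∑ t : lamIdx lam, (starRingEnd ℂ) (Gmap lam X t ⟨i, a⟩) * Y t ⟨i, a⟩) =
        ∑ b : Fin (conj' lam (i : ℕ)),
          (starRingEnd ℂ) (X (Fin.castLE (conj'_le lam (i : ℕ)) b)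
              (Fin.castLE (conj'_le lam (i : ℕ)) a)) * Y ⟨i, b⟩ ⟨i, a⟩ := by
      intro i a
      rw [← Finset.univ_sigma_univ, Finset.sum_sigma]
      rw [Finset.sum_eq_single i]
      · apply Finset.sum_congr rfl
        intro b _
        simp [Gmap]
      · intro i' _ hne
        apply Finset.sum_eq_zero
        intro b _
        simp [Gmap, hne]
      · simp
    have hLstep' : ∀ s : lamIdx lam,
        (∑ t : lamIdx lam, (starRingEnd ℂ) (Gmap lam X t s) * Y t s) =
        ∑ b : Fin (conj' lam (s.fst : ℕ)),
          (starRingEnd ℂ) (X (Fin.castLE (conj'_le lam (s.fst : ℕ)) b)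
              (Fin.castLE (conj'_le lam (s.fst : ℕ)) s.snd)) * Y ⟨s.fst, b⟩ s :=
      fun s => hLstep s.fst s.snd
    rw [Finset.sum_congr rfl (fun s _ => hLstep' s)]
    rw [← Finset.univ_sigma_univ, Finset.sum_sigma]
    -- now work on the RHS
    have hRstep : ∀ s t : Fin k, (starRingEnd ℂ) (X t s) * GmapAdj lam Y t s =
        ∑ i : Fin (Finset.univ.sup lam),
          if h : (t : ℕ) < conj' lam (i : ℕ) ∧ (s : ℕ) < conj' lam (i : ℕ) then
            (starRingEnd ℂ) (X t s) * Y ⟨i, ⟨(t : ℕ), h.1⟩⟩ ⟨i, ⟨(s : ℕ), h.2⟩⟩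
          else 0 := by
      intro s t
      rw [GmapAdj, Finset.mul_sum]
      apply Finset.sum_congr rfl
      intro i _
      by_cases h : (t : ℕ) < conj' lam (i : ℕ) ∧ (s : ℕ) < conj' lam (i : ℕ)
      · rw [dif_pos h, dif_pos h]
      · rw [dif_neg h, dif_neg h, mul_zero]
    simp only [hRstep]
    have swap : ∀ (F : Fin k → Fin k → Fin (Finset.univ.sup lam) → ℂ),
        (∑ s : Fin k, ∑ t : Fin k, ∑ i, F s t i) =
          ∑ i, ∑ s : Fin k, ∑ t : Fin k, F s t i := by
      intro F
      rw [Finset.sum_congr rfl (fun s (_ : s ∈ (Finset.univ : Finset (Fin k))) =>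
        Finset.sum_comm)]
      exact Finset.sum_comm
    rw [swap]
    apply Finset.sum_congr rfl
    intro i _
    -- fix block i; reduce the double Fin k sum to double Fin (conj' lam i) sum
    have hstep2 : ∀ s : Fin k,
        (∑ t : Fin k,
          if h : (t : ℕ) < conj' lam (i : ℕ) ∧ (s : ℕ) < conj' lam (i : ℕ) then
            (starRingEnd ℂ) (X t s) * Y ⟨i, ⟨(t : ℕ), h.1⟩⟩ ⟨i, ⟨(s : ℕ), h.2⟩⟩
          else 0) =
        if hs : (s : ℕ) < conj' lam (i : ℕ) then
          (∑ b : Fin (conj' lam (i : ℕ)),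
            (starRingEnd ℂ) (X (Fin.castLE (conj'_le lam (i : ℕ)) b)
              (Fin.castLE (conj'_le lam (i : ℕ)) ⟨(s : ℕ), hs⟩)) * Y ⟨i, b⟩ ⟨i, ⟨(s : ℕ), hs⟩⟩)
        else 0 := by
      intro s
      by_cases hs : (s : ℕ) < conj' lam (i : ℕ)
      · rw [dif_pos hs,
          ← aux_sum_dite (conj'_le lam (i : ℕ)) (fun b => (starRingEnd ℂ)
            (X (Fin.castLE (conj'_le lam (i : ℕ)) b)
              (Fin.castLE (conj'_le lam (i : ℕ)) ⟨(s : ℕ), hs⟩)) *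
            Y ⟨i, b⟩ ⟨i, ⟨(s : ℕ), hs⟩⟩)]
        apply Finset.sum_congr rfl
        intro t _
        by_cases ht : (t : ℕ) < conj' lam (i : ℕ)
        · rw [dif_pos (⟨ht, hs⟩ : _ ∧ _), dif_pos ht]; rfl
        · rw [dif_neg (fun hc => ht hc.1), dif_neg ht]
      · rw [dif_neg hs]
        apply Finset.sum_eq_zero
        intro t _
        rw [dif_neg (fun hc => hs hc.2)]
    rw [Finset.sum_congr rfl (fun s _ => hstep2 s)]
    exact (aux_sum_dite (conj'_le lam (i : ℕ)) (fun a => ∑ b : Fin (conj' lam (i : ℕ)),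
      (starRingEnd ℂ) (X (Fin.castLE (conj'_le lam (i : ℕ)) b)
        (Fin.castLE (conj'_le lam (i : ℕ)) a)) * Y ⟨i, b⟩ ⟨i, a⟩)).symm

  · -- GmapAdj 1 = diagonal
    ext a b
    rcases eq_or_ne a b with rfl | hab
    · simp only [GmapAdj, Matrix.diagonal_apply_eq]
      have h1 : ∀ i : Fin (Finset.univ.sup lam),
          (if h : (a : ℕ) < conj' lam (i : ℕ) ∧ (a : ℕ) < conj' lam (i : ℕ) then
            (1 : Matrix (lamIdx lam) (lamIdx lam) ℂ) ⟨i, ⟨(a : ℕ), h.1⟩⟩ ⟨i, ⟨(a : ℕ), h.2⟩⟩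
          else 0) = if (i : ℕ) < lam a then 1 else 0 := by
        intro i
        by_cases h : (a : ℕ) < conj' lam (i : ℕ)
        · rw [dif_pos ⟨h, h⟩, if_pos ((lt_conj'_iff hanti a (i : ℕ)).mp h), Matrix.one_apply_eq]
        · rw [dif_neg (fun hc => h hc.1),
            if_neg (fun hi => h ((lt_conj'_iff hanti a (i : ℕ)).mpr hi))]
      rw [Finset.sum_congr rfl (fun i _ => h1 i),
        Fin.sum_univ_eq_sum_range (fun i => if i < lam a then (1 : ℂ) else 0)]
      have hsub : Finset.range (lam a) ⊆ Finset.range (Finset.univ.sup lam) :=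
        Finset.range_subset_range.2 (Finset.le_sup (Finset.mem_univ a))
      rw [← Finset.sum_subset hsub (fun x _ hx => by
        rw [Finset.mem_range, not_lt] at hx
        rw [if_neg (by omega)])]
      rw [Finset.sum_congr rfl (fun x hx => if_pos (Finset.mem_range.mp hx)),
        Finset.sum_const, Finset.card_range, nsmul_eq_mul, mul_one]
    · simp only [GmapAdj, Matrix.diagonal_apply_ne _ hab]
      apply Finset.sum_eq_zero
      intro i _
      by_cases h : (a : ℕ) < conj' lam (i : ℕ) ∧ (b : ℕ) < conj' lam (i : ℕ)
      · rw [dif_pos h]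
        apply Matrix.one_apply_ne
        intro hc
        have := congrArg (fun s : lamIdx lam => (s.2 : ℕ)) hc
        exact hab (Fin.ext (by simpa using this))
      · rw [dif_neg h]
  · -- multiplicativity against upper triangular
    intro X h hUT
    ext ⟨i, a⟩ ⟨i', b⟩
    rcases eq_or_ne i i' with rfl | hne
    · rw [Matrix.mul_apply, ← Finset.univ_sigma_univ, Finset.sum_sigma,
        Finset.sum_eq_single i]
      · have step : ∀ c : Fin (conj' lam (i : ℕ)),
            Gmap lam X ⟨i, a⟩ ⟨i, c⟩ * Gmap lam h ⟨i, c⟩ ⟨i, b⟩ =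
            X (Fin.castLE (conj'_le lam (i : ℕ)) a) (Fin.castLE (conj'_le lam (i : ℕ)) c) *
              h (Fin.castLE (conj'_le lam (i : ℕ)) c) (Fin.castLE (conj'_le lam (i : ℕ)) b) := by
          intro c
          simp [Gmap]
        rw [Finset.sum_congr rfl (fun c _ => step c)]
        show Gmap lam (X * h) ⟨i, a⟩ ⟨i, b⟩ = _
        have hG : Gmap lam (X * h) ⟨i, a⟩ ⟨i, b⟩ =
            ∑ t : Fin k, X (Fin.castLE (conj'_le lam (i : ℕ)) a) t *
              h t (Fin.castLE (conj'_le lam (i : ℕ)) b) := by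
          simp [Gmap, Matrix.mul_apply]
        rw [hG]
        have hvanish : ∀ t : Fin k,
            X (Fin.castLE (conj'_le lam (i : ℕ)) a) t *
              h t (Fin.castLE (conj'_le lam (i : ℕ)) b) =
            if ht : (t : ℕ) < conj' lam (i : ℕ) then
              X (Fin.castLE (conj'_le lam (i : ℕ)) a) (Fin.castLE (conj'_le lam (i : ℕ)) ⟨(t : ℕ), ht⟩) *
                h (Fin.castLE (conj'_le lam (i : ℕ)) ⟨(t : ℕ), ht⟩)
                  (Fin.castLE (conj'_le lam (i : ℕ)) b)
            else 0 := by
          intro t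
          by_cases ht : (t : ℕ) < conj' lam (i : ℕ)
          · rw [dif_pos ht]; rfl
          · rw [dif_neg ht]
            have hzero : h t (Fin.castLE (conj'_le lam (i : ℕ)) b) = 0 := by
              apply hUT
              have hb : (b : ℕ) < conj' lam (i : ℕ) := b.2
              exact Fin.lt_def.mpr (by simp; omega)
            rw [hzero, mul_zero]
        rw [Finset.sum_congr rfl (fun t _ => hvanish t)]
        exact aux_sum_dite (conj'_le lam (i : ℕ)) (fun c =>
          X (Fin.castLE (conj'_le lam (i : ℕ)) a) (Fin.castLE (conj'_le lam (i : ℕ)) c) *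
            h (Fin.castLE (conj'_le lam (i : ℕ)) c) (Fin.castLE (conj'_le lam (i : ℕ)) b))
      · intro j _ hji
        apply Finset.sum_eq_zero
        intro c _
        simp [Gmap, hji]
      · simp
    · have hL : Gmap lam (X * h) ⟨i, a⟩ ⟨i', b⟩ = 0 := by simp [Gmap, hne]
      rw [hL, Matrix.mul_apply]
      symm
      apply Finset.sum_eq_zero
      intro s _
      rcases eq_or_ne i s.1 with his | his
      · have : Gmap lam h s ⟨i', b⟩ = 0 := by
          simp [Gmap, his ▸ hne]
        rw [this, mul_zero]
      · have : Gmap lam X ⟨i, a⟩ s = 0 := by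
          simp [Gmap, his]
        rw [this, zero_mul]
  · -- determinant formula
    intro X
    have hbt : (Gmap lam X).BlockTriangular Sigma.fst := by
      intro s t hlt
      exact if_neg (ne_of_gt hlt)
    rw [hbt.det]
    have himg : Finset.univ.image (Sigma.fst : lamIdx lam → Fin (Finset.univ.sup lam)) =
        Finset.univ := by
      apply Finset.eq_univ_of_forall
      intro i
      rw [Finset.mem_image]
      exact ⟨⟨i, ⟨0, conj'_pos i.2⟩⟩, Finset.mem_univ _, rfl⟩
    rw [himg]
    have hblock : ∀ i : Fin (Finset.univ.sup lam),
        ((Gmap lam X).toSquareBlock Sigma.fst i).det =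
          (proj (conj' lam (i : ℕ)) k * X * (proj (conj' lam (i : ℕ)) k)ᴴ).det := by
      intro i
      let e : {s : lamIdx lam // s.1 = i} ≃ Fin (conj' lam (i : ℕ)) :=
        { toFun := fun s => Fin.cast (congrArg (fun u : Fin _ => conj' lam (u : ℕ)) s.2) s.1.2
          invFun := fun a => ⟨⟨i, a⟩, rfl⟩
          left_inv := by rintro ⟨⟨j, a⟩, rfl⟩; rfl
          right_inv := fun a => rfl }
      rw [← Matrix.det_reindex_self e ((Gmap lam X).toSquareBlock Sigma.fst i)]
      congr 1
      ext a b
      rw [proj_entry (conj'_le lam (i : ℕ)) X a b]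
      show ((Gmap lam X).toSquareBlock Sigma.fst i) (e.symm a) (e.symm b) = _
      simp [Matrix.toSquareBlock, Matrix.toSquareBlockProp, e, Gmap]
    rw [Finset.prod_congr rfl (fun i _ => hblock i)]
    -- regroup the product over blocks by block size
    have hφmem : ∀ i : Fin (Finset.univ.sup lam), conj' lam (i : ℕ) - 1 < k := by
      intro i
      have h1 := conj'_pos i.2
      have h2 := conj'_le lam (i : ℕ)
      omega
    set φ : Fin (Finset.univ.sup lam) → Fin k := fun i => ⟨conj' lam (i : ℕ) - 1, hφmem i⟩
      with hφdef
    have hφ : ∀ i : Fin (Finset.univ.sup lam), conj' lam (i : ℕ) = (φ i : ℕ) + 1 := by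
      intro i
      have h1 := conj'_pos i.2
      simp only [hφdef]
      omega
    rw [← Finset.prod_fiberwise_of_maps_to (fun i (_ : i ∈ Finset.univ) => Finset.mem_univ (φ i))
      (fun i => (proj (conj' lam (i : ℕ)) k * X * (proj (conj' lam (i : ℕ)) k)ᴴ).det)]
    unfold relDetC
    apply Finset.prod_congr rfl
    intro j _
    have hbody : ∀ i ∈ Finset.univ.filter (fun i => φ i = j),
        (proj (conj' lam (i : ℕ)) k * X * (proj (conj' lam (i : ℕ)) k)ᴴ).det =
          (proj ((j : ℕ) + 1) k * X * (proj ((j : ℕ) + 1) k)ᴴ).det := by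
      intro i hi
      have : φ i = j := (Finset.mem_filter.mp hi).2
      rw [hφ i, show ((φ i : ℕ)) = (j : ℕ) from congrArg Fin.val this]
    rw [Finset.prod_congr rfl hbody, Finset.prod_const]
    congr 1
    -- the number of blocks of size j+1 is deltaNat lam j
    set b0 : ℕ := if h : (j : ℕ) + 1 < k then lam ⟨(j : ℕ) + 1, h⟩ else 0 with hb0
    have hiff : ∀ i : Fin (Finset.univ.sup lam),
        φ i = j ↔ (b0 ≤ (i : ℕ) ∧ (i : ℕ) < lam j) := by
      intro i
      have h1 := conj'_pos i.2
      have h2 := conj'_le lam (i : ℕ)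
      have e1 : (i : ℕ) < lam j ↔ (j : ℕ) < conj' lam (i : ℕ) :=
        (lt_conj'_iff hanti j (i : ℕ)).symm
      simp only [hφdef, Fin.ext_iff]
      by_cases hjk : (j : ℕ) + 1 < k
      · have e2 : (i : ℕ) < lam ⟨(j : ℕ) + 1, hjk⟩ ↔ (j : ℕ) + 1 < conj' lam (i : ℕ) :=
          (lt_conj'_iff hanti ⟨(j : ℕ) + 1, hjk⟩ (i : ℕ)).symm
        rw [hb0, dif_pos hjk]
        omega
      · rw [hb0, dif_neg hjk]
        have hk : k ≤ (j : ℕ) + 1 := by omega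
        omega
    have hfilter : Finset.univ.filter (fun i : Fin (Finset.univ.sup lam) => φ i = j) =
        Finset.univ.filter (fun i : Fin (Finset.univ.sup lam) =>
          b0 ≤ (i : ℕ) ∧ (i : ℕ) < lam j) := by
      ext i
      simp only [Finset.mem_filter, Finset.mem_univ, true_and]
      exact hiff i
    rw [hfilter, Finset.card_filter,
      Fin.sum_univ_eq_sum_range (fun i => if b0 ≤ i ∧ i < lam j then 1 else 0),
      ← Finset.card_filter]
    have hIco : (Finset.range (Finset.univ.sup lam)).filter
        (fun i => b0 ≤ i ∧ i < lam j) = Finset.Ico b0 (lam j) := by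
      have hjN : lam j ≤ Finset.univ.sup lam := Finset.le_sup (Finset.mem_univ j)
      ext x
      simp only [Finset.mem_filter, Finset.mem_range, Finset.mem_Ico]
      omega
    rw [hIco, Nat.card_Ico]
    simp only [deltaNat, hb0]
end
end

section
/- Suppose p ∈ ℤ^n and q ∈ ℤ^m have positive nonincreasing entries with Σ_j p_j = Σ_i q_i = N. For every invertible upper-triangular g_0 ∈ Mat_m(ℂ) and invertible upper-triangular h_0 ∈ Mat_n(ℂ), trun_{P,Q}(T_{g_0,h_0}) = (trun_{P,Q} T)_{G_q(g_0), G_p(h_0)}, i.e., for all X ∈ Mat_N(ℂ): G_q(g_0† T(h_0 G_p*(X) h_0†) g_0) = G_q(g_0)† (trun_{P,Q} T)(G_p(h_0) X G_p(h_0)†) G_q(g_0). -/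
open Matrix BigOperators

noncomputable section

lemma sum_castLE {k j : ℕ} (hjk : j ≤ k) (F : Fin k → ℂ)
    (hF : ∀ c : Fin k, j ≤ (c : ℕ) → F c = 0) :
    ∑ c : Fin k, F c = ∑ c : Fin j, F (Fin.castLE hjk c) := by
  classical
  calc ∑ c : Fin k, F c = ∑ c ∈ Finset.univ.map (Fin.castLEEmb hjk), F c := by
        refine (Finset.sum_subset (Finset.subset_univ _) ?_).symm
        intro c _ hc
        apply hF
        by_contra hlt
        push_neg at hlt
        exact hc (Finset.mem_map.mpr ⟨⟨(c : ℕ), hlt⟩, Finset.mem_univ _, by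
          ext; simp [Fin.castLEEmb]⟩)
    _ = ∑ c : Fin j, F (Fin.castLE hjk c) := by
        rw [Finset.sum_map]; rfl

lemma sum_sigma_fib {K : Type*} [Fintype K] {f : K → ℕ}
    (F : (Σ i : K, Fin (f i)) → ℂ) :
    ∑ x : (Σ i : K, Fin (f i)), F x = ∑ i : K, ∑ d : Fin (f i), F ⟨i, d⟩ := by
  rw [← Finset.univ_sigma_univ, Finset.sum_sigma]

lemma sigma_collapse {K : Type*} [Fintype K] [DecidableEq K] {f : K → ℕ} (i : K)
    (G : (i' : K) → Fin (f i') → ℂ) :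
    (∑ i' : K, ∑ d : Fin (f i'), if i' = i then G i' d else 0)
      = ∑ d : Fin (f i), G i d := by
  rw [Finset.sum_eq_single i]
  · simp
  · intro i' _ hne; simp [hne]
  · intro h; exact absurd (Finset.mem_univ i) h

lemma block_conj {k j : ℕ} (hj : j ≤ k) (g Y : Matrix (Fin k) (Fin k) ℂ) (hg : UT g)
    (a b : Fin j) :
    (gᴴ * Y * g) (Fin.castLE hj a) (Fin.castLE hj b)
      = ∑ d : Fin j, (∑ c : Fin j, star (g (Fin.castLE hj c) (Fin.castLE hj a)) *
          Y (Fin.castLE hj c) (Fin.castLE hj d)) * g (Fin.castLE hj d) (Fin.castLE hj b) := by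
  have hd0 : ∀ d : Fin k, j ≤ (d : ℕ) →
      (∑ c : Fin k, star (g c (Fin.castLE hj a)) * Y c d) * g d (Fin.castLE hj b) = 0 := by
    intro d hd
    have : g d (Fin.castLE hj b) = 0 := hg d _ (by
      simp only [Fin.lt_def, Fin.coe_castLE]; exact lt_of_lt_of_le b.2 hd)
    rw [this, mul_zero]
  have hc0 : ∀ (d : Fin k) (c : Fin k), j ≤ (c : ℕ) →
      star (g c (Fin.castLE hj a)) * Y c d = 0 := by
    intro d c hc
    have : g c (Fin.castLE hj a) = 0 := hg c _ (by
      simp only [Fin.lt_def, Fin.coe_castLE]; exact lt_of_lt_of_le a.2 hc)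
    rw [this, star_zero, zero_mul]
  simp only [Matrix.mul_apply, Matrix.conjTranspose_apply]
  rw [sum_castLE hj _ hd0]
  refine Finset.sum_congr rfl (fun d _ => ?_)
  rw [sum_castLE hj _ (hc0 (Fin.castLE hj d))]

lemma gmap_conj {k : ℕ} (lam : Fin k → ℕ) (g Y : Matrix (Fin k) (Fin k) ℂ) (hg : UT g) :
    Gmap lam (gᴴ * Y * g) = (Gmap lam g)ᴴ * Gmap lam Y * Gmap lam g := by
  ext s t
  obtain ⟨i, a⟩ := s
  obtain ⟨i', b⟩ := t
  have hRHS : ((Gmap lam g)ᴴ * Gmap lam Y * Gmap lam g) ⟨i, a⟩ ⟨i', b⟩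
      = ∑ v : lamIdx lam, (∑ u : lamIdx lam,
          star (Gmap lam g u ⟨i, a⟩) * Gmap lam Y u v) * Gmap lam g v ⟨i', b⟩ := by
    simp only [Matrix.mul_apply, Matrix.conjTranspose_apply]
  rw [hRHS]
  by_cases hii : i = i'
  · subst hii
    -- collapse outer sigma sum
    rw [sum_sigma_fib (K := Fin (Finset.univ.sup lam)) (f := fun i0 => conj' lam (i0 : ℕ))]
    have hcol : ∀ i'' : Fin (Finset.univ.sup lam), ∀ d : Fin (conj' lam (i'' : ℕ)),
        (∑ u : lamIdx lam, star (Gmap lam g u ⟨i, a⟩) * Gmap lam Y u ⟨i'', d⟩)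
          * Gmap lam g ⟨i'', d⟩ ⟨i, b⟩
        = if i'' = i then
            (∑ u : lamIdx lam, star (Gmap lam g u ⟨i, a⟩) * Gmap lam Y u ⟨i'', d⟩)
              * g (Fin.castLE (conj'_le lam _) d) (Fin.castLE (conj'_le lam _) b)
          else 0 := by
      intro i'' d
      by_cases h : i'' = i
      · subst h; simp [Gmap]
      · simp [Gmap, h]
    simp only [hcol]
    rw [sigma_collapse]
    -- now collapse the inner sigma sums
    have hinner : ∀ d : Fin (conj' lam (i : ℕ)),
        (∑ u : lamIdx lam, star (Gmap lam g u ⟨i, a⟩) * Gmap lam Y u ⟨i, d⟩)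
        = ∑ c : Fin (conj' lam (i : ℕ)),
            star (g (Fin.castLE (conj'_le lam _) c) (Fin.castLE (conj'_le lam _) a)) *
              Y (Fin.castLE (conj'_le lam _) c) (Fin.castLE (conj'_le lam _) d) := by
      intro d
      rw [sum_sigma_fib (K := Fin (Finset.univ.sup lam)) (f := fun i0 => conj' lam (i0 : ℕ))]
      have hcol2 : ∀ i''' : Fin (Finset.univ.sup lam), ∀ c : Fin (conj' lam (i''' : ℕ)),
          star (Gmap lam g ⟨i''', c⟩ ⟨i, a⟩) * Gmap lam Y ⟨i''', c⟩ ⟨i, d⟩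
          = if i''' = i then
              star (g (Fin.castLE (conj'_le lam _) c) (Fin.castLE (conj'_le lam _) a)) *
                Y (Fin.castLE (conj'_le lam _) c) (Fin.castLE (conj'_le lam _) d)
            else 0 := by
        intro i''' c
        by_cases h : i''' = i
        · subst h; simp [Gmap]
        · simp [Gmap, h]
      simp only [hcol2]
      rw [sigma_collapse]
    simp only [hinner]
    rw [show Gmap lam (gᴴ * Y * g) ⟨i, a⟩ ⟨i, b⟩
        = (gᴴ * Y * g) (Fin.castLE (conj'_le lam (i : ℕ)) a)
            (Fin.castLE (conj'_le lam (i : ℕ)) b) from by simp [Gmap]]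
    exact block_conj (conj'_le lam (i : ℕ)) g Y hg a b
  · rw [show Gmap lam (gᴴ * Y * g) ⟨i, a⟩ ⟨i', b⟩ = 0 from by simp [Gmap, hii]]
    refine (Finset.sum_eq_zero fun v _ => ?_).symm
    by_cases hv : v.1 = i'
    · refine mul_eq_zero_of_left (Finset.sum_eq_zero fun u _ => ?_) _
      by_cases hu : u.1 = i
      · have : Gmap lam Y u v = 0 := by
          simp only [Gmap, hu, hv]
          rw [if_neg hii]
        rw [this, mul_zero]
      · have : Gmap lam g u ⟨i, a⟩ = 0 := by
          simp only [Gmap]; rw [if_neg hu]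
        rw [this, star_zero, zero_mul]
    · have : Gmap lam g v ⟨i', b⟩ = 0 := by
        simp only [Gmap]; rw [if_neg hv]
      rw [this, mul_zero]

def Sblock {k : ℕ} (lam : Fin k → ℕ) (B : Matrix (Fin k) (Fin k) ℂ)
    (X : Matrix (lamIdx lam) (lamIdx lam) ℂ) (a b : Fin k)
    (i : Fin (Finset.univ.sup lam)) : ℂ :=
  ∑ d : Fin (conj' lam (i : ℕ)), ∑ c : Fin (conj' lam (i : ℕ)),
    (B a (Fin.castLE (conj'_le lam (i : ℕ)) c) * X ⟨i, c⟩ ⟨i, d⟩) *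
      star (B b (Fin.castLE (conj'_le lam (i : ℕ)) d))

lemma Sblock_zero {k : ℕ} (lam : Fin k → ℕ) (B : Matrix (Fin k) (Fin k) ℂ) (hB : UT B)
    (X : Matrix (lamIdx lam) (lamIdx lam) ℂ) (a b : Fin k)
    (i : Fin (Finset.univ.sup lam))
    (hi : ¬((a : ℕ) < conj' lam (i : ℕ) ∧ (b : ℕ) < conj' lam (i : ℕ))) :
    Sblock lam B X a b i = 0 := by
  rw [not_and_or] at hi
  rcases hi with hi | hi
  · push_neg at hi
    refine Finset.sum_eq_zero fun d _ => Finset.sum_eq_zero fun c _ => ?_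
    rw [hB a _ (by simp only [Fin.lt_def, Fin.coe_castLE]; exact lt_of_lt_of_le c.2 hi),
      zero_mul, zero_mul]
  · push_neg at hi
    refine Finset.sum_eq_zero fun d _ => Finset.sum_eq_zero fun c _ => ?_
    rw [hB b _ (by simp only [Fin.lt_def, Fin.coe_castLE]; exact lt_of_lt_of_le d.2 hi),
      star_zero, mul_zero]

lemma gmapAdj_left {k : ℕ} (lam : Fin k → ℕ) (B : Matrix (Fin k) (Fin k) ℂ)
    (X : Matrix (lamIdx lam) (lamIdx lam) ℂ) (a b : Fin k) :
    GmapAdj lam (Gmap lam B * X * (Gmap lam B)ᴴ) a b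
      = ∑ i : Fin (Finset.univ.sup lam),
          if _ : (a : ℕ) < conj' lam (i : ℕ) ∧ (b : ℕ) < conj' lam (i : ℕ) then
            Sblock lam B X a b i
          else 0 := by
  simp only [GmapAdj]
  refine Finset.sum_congr rfl fun i _ => ?_
  by_cases hi : (a : ℕ) < conj' lam (i : ℕ) ∧ (b : ℕ) < conj' lam (i : ℕ)
  · rw [dif_pos hi, dif_pos hi]
    obtain ⟨ha, hb⟩ := hi
    have hcasta : Fin.castLE (conj'_le lam (i : ℕ)) (⟨(a : ℕ), ha⟩ : Fin _) = a :=
      Fin.ext rfl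
    have hcastb : Fin.castLE (conj'_le lam (i : ℕ)) (⟨(b : ℕ), hb⟩ : Fin _) = b :=
      Fin.ext rfl
    simp only [Matrix.mul_apply, Matrix.conjTranspose_apply]
    rw [sum_sigma_fib (K := Fin (Finset.univ.sup lam)) (f := fun i0 => conj' lam (i0 : ℕ))]
    have hcol : ∀ (i'' : Fin (Finset.univ.sup lam)) (d : Fin (conj' lam (i'' : ℕ))),
        (∑ u : lamIdx lam, Gmap lam B ⟨i, ⟨(a : ℕ), ha⟩⟩ u * X u ⟨i'', d⟩) *
            star (Gmap lam B ⟨i, ⟨(b : ℕ), hb⟩⟩ ⟨i'', d⟩)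
        = if i'' = i then
            (∑ u : lamIdx lam, Gmap lam B ⟨i, ⟨(a : ℕ), ha⟩⟩ u * X u ⟨i'', d⟩) *
              star (B b (Fin.castLE (conj'_le lam (i'' : ℕ)) d))
          else 0 := by
      intro i'' d
      by_cases h : i'' = i
      · subst h; simp [Gmap, hcastb]
      · have : Gmap lam B ⟨i, ⟨(b : ℕ), hb⟩⟩ ⟨i'', d⟩ = 0 := by
          simp only [Gmap]; rw [if_neg (fun hh => h hh.symm)]
        rw [this, star_zero, mul_zero, if_neg h]
    simp only [hcol]
    rw [sigma_collapse]
    have hinner : ∀ d : Fin (conj' lam (i : ℕ)),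
        (∑ u : lamIdx lam, Gmap lam B ⟨i, ⟨(a : ℕ), ha⟩⟩ u * X u ⟨i, d⟩)
        = ∑ c : Fin (conj' lam (i : ℕ)),
            B a (Fin.castLE (conj'_le lam (i : ℕ)) c) * X ⟨i, c⟩ ⟨i, d⟩ := by
      intro d
      rw [sum_sigma_fib (K := Fin (Finset.univ.sup lam)) (f := fun i0 => conj' lam (i0 : ℕ))]
      have hcol2 : ∀ (i''' : Fin (Finset.univ.sup lam)) (c : Fin (conj' lam (i''' : ℕ))),
          Gmap lam B ⟨i, ⟨(a : ℕ), ha⟩⟩ ⟨i''', c⟩ * X ⟨i''', c⟩ ⟨i, d⟩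
          = if i''' = i then
              B a (Fin.castLE (conj'_le lam (i''' : ℕ)) c) * X ⟨i''', c⟩ ⟨i, d⟩
            else 0 := by
        intro i''' c
        by_cases h : i''' = i
        · subst h; simp [Gmap, hcasta]
        · have : Gmap lam B ⟨i, ⟨(a : ℕ), ha⟩⟩ ⟨i''', c⟩ = 0 := by
            simp only [Gmap]; rw [if_neg (fun hh => h hh.symm)]
          rw [this, zero_mul, if_neg h]
      simp only [hcol2]
      rw [sigma_collapse]
    simp only [hinner]
    simp only [Sblock, Finset.sum_mul]
  · rw [dif_neg hi, dif_neg hi]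

lemma gmapAdj_right {k : ℕ} (lam : Fin k → ℕ) (B : Matrix (Fin k) (Fin k) ℂ)
    (X : Matrix (lamIdx lam) (lamIdx lam) ℂ) (a b : Fin k) :
    (B * GmapAdj lam X * Bᴴ) a b = ∑ i : Fin (Finset.univ.sup lam), Sblock lam B X a b i := by
  simp only [Matrix.mul_apply, Matrix.conjTranspose_apply, GmapAdj, Finset.mul_sum,
    Finset.sum_mul]
  -- now: ∑ d, ∑ c, ∑ i, (B a c * dite ...) * star (B b d)
  rw [show (∑ d : Fin k, ∑ c : Fin k, ∑ i : Fin (Finset.univ.sup lam),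
        B a c * (if h : (c : ℕ) < conj' lam (i : ℕ) ∧ (d : ℕ) < conj' lam (i : ℕ) then
          X ⟨i, ⟨(c : ℕ), h.1⟩⟩ ⟨i, ⟨(d : ℕ), h.2⟩⟩ else 0) * star (B b d))
      = ∑ i : Fin (Finset.univ.sup lam), ∑ d : Fin k, ∑ c : Fin k,
        B a c * (if h : (c : ℕ) < conj' lam (i : ℕ) ∧ (d : ℕ) < conj' lam (i : ℕ) then
          X ⟨i, ⟨(c : ℕ), h.1⟩⟩ ⟨i, ⟨(d : ℕ), h.2⟩⟩ else 0) * star (B b d) from by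
    rw [show ∀ (F : Fin k → Fin k → Fin (Finset.univ.sup lam) → ℂ),
        (∑ d : Fin k, ∑ c : Fin k, ∑ i, F d c i) = ∑ i, ∑ d : Fin k, ∑ c : Fin k, F d c i from
      fun F => (Finset.sum_congr rfl fun d _ => Finset.sum_comm).trans Finset.sum_comm]]
  refine Finset.sum_congr rfl fun i _ => ?_
  have hd0 : ∀ d : Fin k, conj' lam (i : ℕ) ≤ (d : ℕ) →
      (∑ c : Fin k, B a c * (if h : (c : ℕ) < conj' lam (i : ℕ) ∧ (d : ℕ) < conj' lam (i : ℕ)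
        then X ⟨i, ⟨(c : ℕ), h.1⟩⟩ ⟨i, ⟨(d : ℕ), h.2⟩⟩ else 0) * star (B b d)) = 0 := by
    intro d hd
    refine Finset.sum_eq_zero fun c _ => ?_
    rw [dif_neg (fun h => absurd h.2 (not_lt.mpr hd)), mul_zero, zero_mul]
  rw [sum_castLE (conj'_le lam (i : ℕ)) _ hd0]
  refine Finset.sum_congr rfl fun d _ => ?_
  have hc0 : ∀ c : Fin k, conj' lam (i : ℕ) ≤ (c : ℕ) →
      B a c * (if h : (c : ℕ) < conj' lam (i : ℕ) ∧
          ((Fin.castLE (conj'_le lam (i : ℕ)) d : Fin k) : ℕ) < conj' lam (i : ℕ)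
        then X ⟨i, ⟨(c : ℕ), h.1⟩⟩ ⟨i, ⟨(((Fin.castLE (conj'_le lam (i : ℕ)) d : Fin k)) : ℕ), h.2⟩⟩
        else 0) * star (B b (Fin.castLE (conj'_le lam (i : ℕ)) d)) = 0 := by
    intro c hc
    rw [dif_neg (fun h => absurd h.1 (not_lt.mpr hc)), mul_zero, zero_mul]
  rw [sum_castLE (conj'_le lam (i : ℕ)) _ hc0]
  refine Finset.sum_congr rfl fun c _ => ?_
  rw [dif_pos ⟨c.2, d.2⟩]
  rfl

lemma gmapAdj_conj {k : ℕ} (lam : Fin k → ℕ) (B : Matrix (Fin k) (Fin k) ℂ) (hB : UT B)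
    (X : Matrix (lamIdx lam) (lamIdx lam) ℂ) :
    GmapAdj lam (Gmap lam B * X * (Gmap lam B)ᴴ) = B * GmapAdj lam X * Bᴴ := by
  ext a b
  rw [gmapAdj_left, gmapAdj_right]
  refine Finset.sum_congr rfl fun i _ => ?_
  by_cases hi : (a : ℕ) < conj' lam (i : ℕ) ∧ (b : ℕ) < conj' lam (i : ℕ)
  · rw [dif_pos hi]
  · rw [dif_neg hi, Sblock_zero lam B hB X a b i hi]

/-- Proposition: scaling commutes with the reduction: for invertible upper triangular
`g₀, h₀`, `trun_{P,Q}(T_{g₀,h₀}) = (trun_{P,Q} T)_{G_q(g₀), G_p(h₀)}`. -/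
theorem stmt6 {n m r N : ℕ} (A : Fin r → Matrix (Fin m) (Fin n) ℂ)
    (p : Fin n → ℕ) (q : Fin m → ℕ)
    (hp : Antitone p) (hp0 : ∀ j, 0 < p j) (hq : Antitone q) (hq0 : ∀ i, 0 < q i)
    (hpN : ∑ j, p j = N) (hqN : ∑ i, q i = N)
    (g₀ : Matrix (Fin m) (Fin m) ℂ) (h₀ : Matrix (Fin n) (Fin n) ℂ)
    (hg₀ : IsUnit g₀.det) (hg₀u : UT g₀) (hh₀ : IsUnit h₀.det) (hh₀u : UT h₀) :
    ∀ X : Matrix (lamIdx p) (lamIdx p) ℂ,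
      Gmap q (g₀ᴴ * cpMap A (h₀ * GmapAdj p X * h₀ᴴ) * g₀) =
        (Gmap q g₀)ᴴ * trun A p q (Gmap p h₀ * X * (Gmap p h₀)ᴴ) * Gmap q g₀ := by
  intro X
  rw [trun, gmapAdj_conj p h₀ hh₀u X]
  exact gmap_conj q g₀ _ hg₀u
end
end

section
/- Let T, p, q, P, Q, T̲, P̲, Q̲ be as in the setup and let ε > 0. If there exist invertible upper-triangular matrices g̲ ∈ Mat_{m̃}(ℂ) and h̲ ∈ Mat_{ñ}(ℂ) with ‖g̲† T̲(h̲ h̲†) g̲ − Q̲‖ ≤ ε and ‖h̲† T̲*(g̲ g̲†) h̲ − P̲‖ ≤ ε, then there exist invertible upper-triangular matrices g ∈ Mat_m(ℂ) and h ∈ Mat_n(ℂ) with ‖g† T(h h†) g − Q‖ ≤ 2ε and ‖h† T*(g g†) h − P‖ ≤ 2ε. -/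
open Matrix BigOperators

noncomputable section

section AuxStmt9

lemma aux_sum_castLE {M : Type*} [AddCommMonoid M] {j k : ℕ} (hjk : j ≤ k) (f : Fin k → M)
    (hf : ∀ a : Fin k, j ≤ (a : ℕ) → f a = 0) :
    ∑ a : Fin k, f a = ∑ a : Fin j, f (Fin.castLE hjk a) := by
  classical
  have e : ∑ a : Fin j, f (Fin.castLE hjk a) = ∑ a ∈ Finset.univ.map (Fin.castLEEmb hjk), f a := by
    rw [Finset.sum_map]; rfl
  rw [e]
  symm
  apply Finset.sum_subset (Finset.subset_univ _)
  intro a _ ha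
  apply hf
  by_contra hcon
  push_neg at hcon
  exact ha (Finset.mem_map.2 ⟨⟨(a : ℕ), hcon⟩, Finset.mem_univ _, by ext; simp⟩)

lemma aux_proj_mul_conjT {j k : ℕ} (h : j ≤ k) : proj j k * (proj j k)ᴴ = 1 := by
  ext a b
  simp only [Matrix.mul_apply, proj, Matrix.conjTranspose_apply, Matrix.of_apply,
    Matrix.one_apply]
  rw [Finset.sum_eq_single (Fin.castLE h a)]
  · by_cases hab : a = b
    · simp [hab]
    · have h1 : ¬((a : ℕ) = (b : ℕ)) := fun hc => hab (Fin.ext hc)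
      have h2 : ¬((b : ℕ) = (a : ℕ)) := fun hc => h1 hc.symm
      simp [hab, h1, h2]
  · intro l _ hl
    have : ¬((a : ℕ) = (l : ℕ)) := fun ha => hl (by ext; simpa using ha.symm)
    simp [this]
  · simp

lemma aux_cancel {j k : ℕ} {ι : Type*} [Fintype ι] (hjk : j ≤ k)
    (X : Matrix (Fin j) ι ℂ) : proj j k * ((proj j k)ᴴ * X) = X := by
  rw [← Matrix.mul_assoc, aux_proj_mul_conjT hjk, Matrix.one_mul]

lemma aux_frob_eq {ι κ : Type*} [Fintype ι] [Fintype κ] (A : Matrix ι κ ℂ) :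
    frob A = Real.sqrt (∑ i, ∑ l, Complex.normSq (A i l)) := by
  unfold frob
  congr 1
  simp [Matrix.trace, Matrix.mul_apply, Matrix.diag, Matrix.conjTranspose_apply,
    Complex.mul_conj, Complex.re_sum]

lemma aux_pad_apply {j k : ℕ} (Z : Matrix (Fin j) (Fin j) ℂ) (a b : Fin k) :
    ((proj j k)ᴴ * Z * proj j k) a b =
      if h : (a : ℕ) < j ∧ (b : ℕ) < j then Z ⟨(a : ℕ), h.1⟩ ⟨(b : ℕ), h.2⟩ else 0 := by
  by_cases ha : (a : ℕ) < j
  · by_cases hb : (b : ℕ) < j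
    · rw [dif_pos ⟨ha, hb⟩]
      have e1 : ∀ i : Fin j, ((i : ℕ) = (a : ℕ)) = (i = ⟨(a : ℕ), ha⟩) :=
        fun i => propext ⟨fun h => Fin.ext h, fun h => by subst h; rfl⟩
      have e2 : ∀ i : Fin j, ((i : ℕ) = (b : ℕ)) = (i = ⟨(b : ℕ), hb⟩) :=
        fun i => propext ⟨fun h => Fin.ext h, fun h => by subst h; rfl⟩
      simp [Matrix.mul_apply, proj, Matrix.conjTranspose_apply, e1, e2,
        apply_ite (star : ℂ → ℂ), ite_mul, mul_ite, Finset.sum_ite_eq',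
        Finset.sum_ite_eq]
    · rw [dif_neg (fun hc => hb hc.2)]
      have e2 : ∀ i : Fin j, ¬((i : ℕ) = (b : ℕ)) := fun i h => hb (h ▸ i.isLt)
      simp [Matrix.mul_apply, proj, e2]
  · rw [dif_neg (fun hc => ha hc.1)]
    have e1 : ∀ i : Fin j, ¬((i : ℕ) = (a : ℕ)) := fun i h => ha (h ▸ i.isLt)
    simp [Matrix.mul_apply, proj, Matrix.conjTranspose_apply, e1]

lemma aux_frob_pad {j k : ℕ} (hjk : j ≤ k) (Z : Matrix (Fin j) (Fin j) ℂ) :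
    frob ((proj j k)ᴴ * Z * proj j k) = frob Z := by
  rw [aux_frob_eq, aux_frob_eq]
  congr 1
  have h1 : ∀ a : Fin k, j ≤ (a : ℕ) →
      ∑ l, Complex.normSq (((proj j k)ᴴ * Z * proj j k) a l) = 0 := by
    intro a ha
    apply Finset.sum_eq_zero
    intro l _
    rw [aux_pad_apply, dif_neg (fun hc => absurd hc.1 (Nat.not_lt.2 ha))]
    simp
  rw [aux_sum_castLE hjk _ h1]
  apply Finset.sum_congr rfl
  intro a _
  have h2 : ∀ l : Fin k, j ≤ (l : ℕ) →
      Complex.normSq (((proj j k)ᴴ * Z * proj j k) (Fin.castLE hjk a) l) = 0 := by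
    intro l hl
    rw [aux_pad_apply, dif_neg (fun hc => absurd hc.2 (Nat.not_lt.2 hl))]
    simp
  rw [aux_sum_castLE hjk _ h2]
  apply Finset.sum_congr rfl
  intro b _
  rw [aux_pad_apply, dif_pos ⟨a.isLt, b.isLt⟩]
  simp

lemma aux_diag_pad {j k : ℕ} (hjk : j ≤ k) (q : Fin k → ℂ)
    (hq : ∀ i : Fin k, j ≤ (i : ℕ) → q i = 0) :
    Matrix.diagonal q =
      (proj j k)ᴴ * Matrix.diagonal (fun i : Fin j => q (Fin.castLE hjk i)) * proj j k := by
  ext a b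
  rw [aux_pad_apply]
  by_cases hab : a = b
  · subst hab
    by_cases ha : (a : ℕ) < j
    · rw [dif_pos ⟨ha, ha⟩, Matrix.diagonal_apply_eq, Matrix.diagonal_apply_eq]
      have : Fin.castLE hjk ⟨(a : ℕ), ha⟩ = a := Fin.ext rfl
      rw [this]
    · rw [dif_neg (fun hc => ha hc.1), Matrix.diagonal_apply_eq, hq a (Nat.le_of_not_lt ha)]
  · rw [Matrix.diagonal_apply_ne _ hab]
    split
    · rw [Matrix.diagonal_apply_ne]
      intro hc
      have hv := congrArg Fin.val hc
      simp only [] at hv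
      exact hab (Fin.ext hv)
    · rfl

lemma aux_cpMap_compress {n m r nt mt : ℕ} (A : Fin r → Matrix (Fin m) (Fin n) ℂ)
    (X : Matrix (Fin nt) (Fin nt) ℂ) :
    cpMap (fun i => proj mt m * A i * (proj nt n)ᴴ) X =
      proj mt m * cpMap A ((proj nt n)ᴴ * X * proj nt n) * (proj mt m)ᴴ := by
  unfold cpMap
  rw [Matrix.mul_sum, Matrix.sum_mul]
  apply Finset.sum_congr rfl
  intro i _
  simp only [Matrix.conjTranspose_mul, Matrix.conjTranspose_conjTranspose, Matrix.mul_assoc]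

lemma aux_cpDual_compress {n m r nt mt : ℕ} (A : Fin r → Matrix (Fin m) (Fin n) ℂ)
    (Y : Matrix (Fin mt) (Fin mt) ℂ) :
    cpDual (fun i => proj mt m * A i * (proj nt n)ᴴ) Y =
      proj nt n * cpDual A ((proj mt m)ᴴ * Y * proj mt m) * (proj nt n)ᴴ := by
  unfold cpDual
  rw [Matrix.mul_sum, Matrix.sum_mul]
  apply Finset.sum_congr rfl
  intro i _
  simp only [Matrix.conjTranspose_mul, Matrix.conjTranspose_conjTranspose, Matrix.mul_assoc]

/-- The padded matrix `gbar ⊕ δ·I`. -/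
def padg (jt k : ℕ) (gb : Matrix (Fin jt) (Fin jt) ℂ) (δ : ℝ) : Matrix (Fin k) (Fin k) ℂ :=
  (proj jt k)ᴴ * gb * proj jt k +
    Matrix.diagonal (fun i : Fin k => if (i : ℕ) < jt then 0 else (δ : ℂ))

lemma padg_zero (jt k : ℕ) (gb : Matrix (Fin jt) (Fin jt) ℂ) :
    padg jt k gb 0 = (proj jt k)ᴴ * gb * proj jt k := by
  unfold padg
  have : (fun i : Fin k => if (i : ℕ) < jt then (0 : ℂ) else ((0 : ℝ) : ℂ)) = fun _ => 0 := by
    funext i; split <;> simp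
  rw [this, Matrix.diagonal_zero, add_zero]

lemma UT_padg {jt k : ℕ} {gb : Matrix (Fin jt) (Fin jt) ℂ} (hgb : UT gb) (δ : ℝ) :
    UT (padg jt k gb δ) := by
  intro i j hij
  unfold padg
  rw [Matrix.add_apply, Matrix.diagonal_apply_ne _ (ne_of_lt hij).symm, add_zero,
    aux_pad_apply]
  split
  · exact hgb _ _ hij
  · rfl

lemma padg_diag {jt k : ℕ} (gb : Matrix (Fin jt) (Fin jt) ℂ) (δ : ℝ) (i : Fin k) :
    padg jt k gb δ i i =
      if h : (i : ℕ) < jt then gb ⟨(i : ℕ), h⟩ ⟨(i : ℕ), h⟩ else (δ : ℂ) := by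
  unfold padg
  rw [Matrix.add_apply, Matrix.diagonal_apply_eq, aux_pad_apply]
  by_cases h : (i : ℕ) < jt
  · rw [dif_pos ⟨h, h⟩, dif_pos h, if_pos h, add_zero]
  · rw [dif_neg (fun hc => h hc.1), dif_neg h, if_neg h, zero_add]

lemma det_padg_ne {jt k : ℕ} {gb : Matrix (Fin jt) (Fin jt) ℂ} (hgbu : UT gb)
    (hdet : IsUnit gb.det) {δ : ℝ} (hδ : δ ≠ 0) : IsUnit (padg jt k gb δ).det := by
  rw [isUnit_iff_ne_zero]
  rw [Matrix.det_of_upperTriangular (fun i j h => UT_padg hgbu δ i j h)]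
  have hgbd : ∀ i : Fin jt, gb i i ≠ 0 := by
    have := isUnit_iff_ne_zero.mp hdet
    rw [Matrix.det_of_upperTriangular (fun i j h => hgbu i j h)] at this
    intro i
    exact Finset.prod_ne_zero_iff.mp this i (Finset.mem_univ i)
  rw [Finset.prod_ne_zero_iff]
  intro i _
  rw [padg_diag]
  split
  · exact hgbd _
  · exact Complex.ofReal_ne_zero.mpr hδ

lemma continuous_padg (jt k : ℕ) (gb : Matrix (Fin jt) (Fin jt) ℂ) :
    Continuous (fun δ : ℝ => padg jt k gb δ) := by
  unfold padg
  apply Continuous.add continuous_const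
  apply continuous_matrix
  intro i j
  simp only [Matrix.diagonal_apply]
  split_ifs
  · exact continuous_const
  · exact Complex.continuous_ofReal
  · exact continuous_const

end AuxStmt9

/-- Lemma: an `ε`-scaling of the compressed operator `T̲` to `(I → Q̲, I → P̲)` by upper
triangular matrices lifts to a `2ε`-scaling of `T` to `(I → Q, I → P)` by upper triangular
matrices.  Here `nt = rank P`, `mt = rank Q`. -/
theorem stmt9 {n m r : ℕ} (A : Fin r → Matrix (Fin m) (Fin n) ℂ)
    (p : Fin n → ℝ) (q : Fin m → ℝ)
    (hp : Antitone p) (hp0 : ∀ j, 0 ≤ p j) (hq : Antitone q) (hq0 : ∀ i, 0 ≤ q i)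
    (nt mt : ℕ) (hnt : nt ≤ n) (hmt : mt ≤ m)
    (hntc : ∀ j : Fin n, 0 < p j ↔ (j : ℕ) < nt)
    (hmtc : ∀ i : Fin m, 0 < q i ↔ (i : ℕ) < mt)
    (ε : ℝ) (hε : 0 < ε)
    (gbar : Matrix (Fin mt) (Fin mt) ℂ) (hbar : Matrix (Fin nt) (Fin nt) ℂ)
    (hgbar : IsUnit gbar.det) (hgbaru : UT gbar) (hhbar : IsUnit hbar.det) (hhbaru : UT hbar)
    (hsc1 : frob (gbarᴴ * cpMap (fun i => proj mt m * A i * (proj nt n)ᴴ) (hbar * hbarᴴ) * gbar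
        - Matrix.diagonal (fun i => (q (Fin.castLE hmt i) : ℂ))) ≤ ε)
    (hsc2 : frob (hbarᴴ * cpDual (fun i => proj mt m * A i * (proj nt n)ᴴ) (gbar * gbarᴴ) * hbar
        - Matrix.diagonal (fun j => (p (Fin.castLE hnt j) : ℂ))) ≤ ε) :
    ∃ (g : Matrix (Fin m) (Fin m) ℂ) (h : Matrix (Fin n) (Fin n) ℂ),
      IsUnit g.det ∧ UT g ∧ IsUnit h.det ∧ UT h ∧
      frob (gᴴ * cpMap A (h * hᴴ) * g - Matrix.diagonal (fun i => (q i : ℂ))) ≤ 2 * ε ∧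
      frob (hᴴ * cpDual A (g * gᴴ) * h - Matrix.diagonal (fun j => (p j : ℂ))) ≤ 2 * ε := by
  classical
  have hqz : ∀ i : Fin m, mt ≤ (i : ℕ) → ((q i : ℝ) : ℂ) = 0 := by
    intro i hi
    have h1 : ¬ 0 < q i := fun hlt => absurd ((hmtc i).1 hlt) (by omega)
    have h2 : q i = 0 := le_antisymm (not_lt.1 h1) (hq0 i)
    simp [h2]
  have hpz : ∀ j : Fin n, nt ≤ (j : ℕ) → ((p j : ℝ) : ℂ) = 0 := by
    intro j hj
    have h1 : ¬ 0 < p j := fun hlt => absurd ((hntc j).1 hlt) (by omega)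
    have h2 : p j = 0 := le_antisymm (not_lt.1 h1) (hp0 j)
    simp [h2]
  set g : ℝ → Matrix (Fin m) (Fin m) ℂ := fun δ => padg mt m gbar δ with hgdef
  set h : ℝ → Matrix (Fin n) (Fin n) ℂ := fun δ => padg nt n hbar δ with hhdef
  have hg0 : g 0 = (proj mt m)ᴴ * gbar * proj mt m := padg_zero _ _ _
  have hh0 : h 0 = (proj nt n)ᴴ * hbar * proj nt n := padg_zero _ _ _
  -- value at 0 for the first expression
  have hF0 : frob ((g 0)ᴴ * cpMap A (h 0 * (h 0)ᴴ) * g 0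
      - Matrix.diagonal fun i => (q i : ℂ)) ≤ ε := by
    have key : (g 0)ᴴ * cpMap A (h 0 * (h 0)ᴴ) * g 0 - Matrix.diagonal (fun i => ((q i : ℝ) : ℂ))
        = (proj mt m)ᴴ *
          (gbarᴴ * cpMap (fun i => proj mt m * A i * (proj nt n)ᴴ) (hbar * hbarᴴ) * gbar
            - Matrix.diagonal (fun i : Fin mt => ((q (Fin.castLE hmt i) : ℝ) : ℂ)))
          * proj mt m := by
      rw [hg0, hh0, Matrix.mul_sub, Matrix.sub_mul]
      congr 1
      · conv_rhs => rw [aux_cpMap_compress]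
        simp only [Matrix.conjTranspose_mul, Matrix.conjTranspose_conjTranspose,
          Matrix.mul_assoc, aux_cancel hnt, aux_cancel hmt]
      · exact aux_diag_pad hmt _ hqz
    rw [key, aux_frob_pad hmt]
    exact hsc1
  have hG0 : frob ((h 0)ᴴ * cpDual A (g 0 * (g 0)ᴴ) * h 0
      - Matrix.diagonal fun j => (p j : ℂ)) ≤ ε := by
    have key : (h 0)ᴴ * cpDual A (g 0 * (g 0)ᴴ) * h 0 - Matrix.diagonal (fun j => ((p j : ℝ) : ℂ))
        = (proj nt n)ᴴ *
          (hbarᴴ * cpDual (fun i => proj mt m * A i * (proj nt n)ᴴ) (gbar * gbarᴴ) * hbar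
            - Matrix.diagonal (fun j : Fin nt => ((p (Fin.castLE hnt j) : ℝ) : ℂ)))
          * proj nt n := by
      rw [hg0, hh0, Matrix.mul_sub, Matrix.sub_mul]
      congr 1
      · conv_rhs => rw [aux_cpDual_compress]
        simp only [Matrix.conjTranspose_mul, Matrix.conjTranspose_conjTranspose,
          Matrix.mul_assoc, aux_cancel hnt, aux_cancel hmt]
      · exact aux_diag_pad hnt _ hpz
    rw [key, aux_frob_pad hnt]
    exact hsc2
  -- continuity
  have cg : Continuous g := continuous_padg mt m gbar
  have ch : Continuous h := continuous_padg nt n hbar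
  have frob_cont : ∀ {k : ℕ} (M : ℝ → Matrix (Fin k) (Fin k) ℂ), Continuous M →
      Continuous fun δ => frob (M δ) := by
    intro k M hM
    unfold frob
    exact Real.continuous_sqrt.comp (Complex.continuous_re.comp
      ((hM.matrix_mul hM.matrix_conjTranspose).matrix_trace))
  have cF : Continuous fun δ => frob ((g δ)ᴴ * cpMap A (h δ * (h δ)ᴴ) * g δ
      - Matrix.diagonal fun i => (q i : ℂ)) := by
    apply frob_cont
    apply Continuous.sub _ continuous_const
    refine (Continuous.matrix_mul (cg.matrix_conjTranspose.matrix_mul ?_) cg)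
    unfold cpMap
    exact continuous_finset_sum _ fun i _ =>
      (continuous_const.matrix_mul (ch.matrix_mul ch.matrix_conjTranspose)).matrix_mul
        continuous_const
  have cG : Continuous fun δ => frob ((h δ)ᴴ * cpDual A (g δ * (g δ)ᴴ) * h δ
      - Matrix.diagonal fun j => (p j : ℂ)) := by
    apply frob_cont
    apply Continuous.sub _ continuous_const
    refine (Continuous.matrix_mul (ch.matrix_conjTranspose.matrix_mul ?_) ch)
    unfold cpDual
    exact continuous_finset_sum _ fun i _ =>
      (continuous_const.matrix_mul (cg.matrix_mul cg.matrix_conjTranspose)).matrix_mul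
        continuous_const
  have hFe : ∀ᶠ δ in nhds (0 : ℝ), frob ((g δ)ᴴ * cpMap A (h δ * (h δ)ᴴ) * g δ
      - Matrix.diagonal fun i => (q i : ℂ)) < 2 * ε :=
    Filter.Tendsto.eventually_lt_const (lt_of_le_of_lt hF0 (by linarith)) (cF.tendsto 0)
  have hGe : ∀ᶠ δ in nhds (0 : ℝ), frob ((h δ)ᴴ * cpDual A (g δ * (g δ)ᴴ) * h δ
      - Matrix.diagonal fun j => (p j : ℂ)) < 2 * ε :=
    Filter.Tendsto.eventually_lt_const (lt_of_le_of_lt hG0 (by linarith)) (cG.tendsto 0)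
  obtain ⟨s, hs0, hball⟩ := Metric.eventually_nhds_iff.mp (hFe.and hGe)
  have hd : dist (s / 2) (0 : ℝ) < s := by
    rw [Real.dist_eq, sub_zero, abs_of_pos (by linarith)]
    linarith
  obtain ⟨h1, h2⟩ := hball hd
  exact ⟨g (s / 2), h (s / 2),
    det_padg_ne hgbaru hgbar (ne_of_gt (half_pos hs0)), UT_padg hgbaru _,
    det_padg_ne hhbaru hhbar (ne_of_gt (half_pos hs0)), UT_padg hhbaru _,
    h1.le, h2.le⟩
end
end

section
/- Let T, p, q, P, Q be as in the setup, and suppose P and Q are invertible (p_n > 0 and q_m > 0) and cap(T, P, Q) > 0. Then T and T* both map positive-definite matrices to positive-definite matrices: for every positive-definite X ∈ Mat_n(ℂ), T(X) is positive definite, and for every positive-definite Y ∈ Mat_m(ℂ), T*(Y) is positive definite. -/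
open Matrix BigOperators ComplexOrder

noncomputable section

/-!
If a nonzero `y` satisfies `A_iᴴ y = 0` for all `i`, then `T(X) y = 0` for every `X`; taking
`h = 1`, the last factor `det(T(P))^{q_m}` of the numerator vanishes because `q_m > 0`, so the
capacity is `0`. If a nonzero `x` satisfies `A_i x = 0` for all `i`, let `k` be its last nonzero
coordinate and let `h` be the identity with column `k` replaced by the multiple of `x` whose
`k`-th entry is `√s`. Then `h` is upper triangular, `T(h P hᴴ)` does not depend on `s`, and the
leading minors of `hᴴ h` are `1` before `k` and `s` from `k` on, so `det(P, hᴴ h) = s^{p_k}` by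
telescoping `Σ_{j ≥ k} Δp_j = p_k`; letting `s → ∞` bounds the capacity by `0`. When both common
kernels are trivial, `Σ_i A_i X A_iᴴ` and `Σ_i A_iᴴ Y A_i` are positive definite for positive
definite `X`, `Y`.
-/

open Finset Filter Topology

section CompletelyPositive

variable {ι κ : Type*} {r : ℕ}

lemma cpMap_posSemidef [Fintype ι] [Fintype κ] (A : Fin r → Matrix κ ι ℂ) {X : Matrix ι ι ℂ}
    (hX : X.PosSemidef) : (cpMap A X).PosSemidef :=
  Finset.sum_induction _ _ (fun _ _ => PosSemidef.add) PosSemidef.zero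
    fun i _ => hX.mul_mul_conjTranspose_same (A i)

lemma dotProduct_cpMap_mulVec [Fintype ι] [Fintype κ] (A : Fin r → Matrix κ ι ℂ)
    (X : Matrix ι ι ℂ) (y : κ → ℂ) :
    star y ⬝ᵥ cpMap A X *ᵥ y = ∑ i, star ((A i)ᴴ *ᵥ y) ⬝ᵥ X *ᵥ ((A i)ᴴ *ᵥ y) := by
  simp only [cpMap, sum_mulVec, dotProduct_sum, star_mulVec, conjTranspose_conjTranspose,
    ← mulVec_mulVec, dotProduct_mulVec]

lemma cpMap_posDef [Fintype ι] [Fintype κ] (A : Fin r → Matrix κ ι ℂ)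
    (hA : ∀ y, (∀ i, (A i)ᴴ *ᵥ y = 0) → y = 0) {X : Matrix ι ι ℂ} (hX : X.PosDef) :
    (cpMap A X).PosDef := by
  refine posDef_iff_dotProduct_mulVec.mpr ⟨(cpMap_posSemidef A hX.posSemidef).isHermitian,
    fun y hy => ?_⟩
  obtain ⟨i, hi⟩ : ∃ i, (A i)ᴴ *ᵥ y ≠ 0 := by
    by_contra! h
    exact hy (hA y h)
  rw [dotProduct_cpMap_mulVec]
  exact Finset.sum_pos' (fun j _ => hX.posSemidef.dotProduct_mulVec_nonneg _)
    ⟨i, mem_univ i, hX.dotProduct_mulVec_pos hi⟩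

lemma cpDual_eq_cpMap_conjTranspose [Fintype κ] (A : Fin r → Matrix κ ι ℂ) (Y : Matrix κ κ ℂ) :
    cpDual A Y = cpMap (fun i => (A i)ᴴ) Y := by
  simp only [cpDual, cpMap, conjTranspose_conjTranspose]

lemma cpMap_mulVec_eq_zero [Fintype ι] [Fintype κ] {A : Fin r → Matrix κ ι ℂ} {y : κ → ℂ}
    (hy : ∀ i, (A i)ᴴ *ᵥ y = 0) (X : Matrix ι ι ℂ) : cpMap A X *ᵥ y = 0 := by
  simp [cpMap, sum_mulVec, ← mulVec_mulVec, hy]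

lemma cpMap_conj_eq_of_mul_eq [Fintype ι] {A : Fin r → Matrix κ ι ℂ} {g g' : Matrix ι ι ℂ}
    (h : ∀ i, A i * g = A i * g') (X : Matrix ι ι ℂ) :
    cpMap A (g * X * gᴴ) = cpMap A (g' * X * g'ᴴ) := by
  have key : ∀ (i) (g : Matrix ι ι ℂ), A i * (g * X * gᴴ) * (A i)ᴴ = A i * g * X * (A i * g)ᴴ :=
    fun i g => by simp only [conjTranspose_mul, Matrix.mul_assoc]
  simp only [cpMap, key, h]

end CompletelyPositive

lemma proj_mul {s k : ℕ} (hs : s ≤ k) {κ : Type*} [Fintype κ] (M : Matrix (Fin k) κ ℂ) :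
    proj s k * M = M.submatrix (Fin.castLE hs) id := by
  ext a c
  rw [mul_apply, sum_eq_single (Fin.castLE hs a)]
  · simp [proj]
  · intro b _ hb
    simp [proj, show (a : ℕ) ≠ b from fun h => hb (Fin.ext h.symm)]
  · simp

lemma mul_projH {s k : ℕ} (hs : s ≤ k) {κ : Type*} [Fintype κ] (M : Matrix κ (Fin k) ℂ) :
    M * (proj s k)ᴴ = M.submatrix id (Fin.castLE hs) := by
  rw [← conjTranspose_conjTranspose M, ← conjTranspose_mul, proj_mul hs]
  rfl

lemma proj_mul_mul_projH {s k : ℕ} (hs : s ≤ k) (X : Matrix (Fin k) (Fin k) ℂ) :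
    proj s k * X * (proj s k)ᴴ = X.submatrix (Fin.castLE hs) (Fin.castLE hs) := by
  rw [proj_mul hs, mul_projH hs]
  rfl

lemma proj_mul_projH {s k : ℕ} (hs : s ≤ k) : proj s k * (proj s k)ᴴ = 1 := by
  rw [proj_mul hs]
  ext a b
  simp [proj, one_apply, Fin.ext_iff, eq_comm]

lemma proj_self (k : ℕ) : proj k k = 1 := by
  ext i l
  simp [proj, one_apply, Fin.ext_iff]

lemma det_proj_mul_mul_projH_of_eq {s k : ℕ} (hs : s = k) (X : Matrix (Fin k) (Fin k) ℂ) :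
    (proj s k * X * (proj s k)ᴴ).det = X.det := by
  subst hs
  simp [proj_self]

lemma UT.mul_projH {s k : ℕ} (hs : s ≤ k) {g : Matrix (Fin k) (Fin k) ℂ} (hg : UT g) :
    g * (proj s k)ᴴ = (proj s k)ᴴ * (proj s k * g * (proj s k)ᴴ) := by
  ext a b
  rw [_root_.mul_projH hs, proj_mul_mul_projH hs, mul_apply]
  by_cases ha : (a : ℕ) < s
  · rw [sum_eq_single ⟨a, ha⟩]
    · simp [proj, conjTranspose_apply]
    · intro c _ hc
      simp [proj, conjTranspose_apply, show (c : ℕ) ≠ a from fun h => hc (Fin.ext h)]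
    · simp
  · rw [submatrix_apply, hg _ _ (by simp [Fin.lt_def]; omega)]
    refine (sum_eq_zero fun c _ => ?_).symm
    simp [proj, conjTranspose_apply, show (c : ℕ) ≠ a by omega]

lemma UT.det_proj_mul_conjTranspose_mul_self_mul_projH {s k : ℕ} (hs : s ≤ k)
    {g : Matrix (Fin k) (Fin k) ℂ} (hg : UT g) :
    (proj s k * (gᴴ * g) * (proj s k)ᴴ).det
      = star (∏ i : Fin s, g (Fin.castLE hs i) (Fin.castLE hs i))
        * ∏ i : Fin s, g (Fin.castLE hs i) (Fin.castLE hs i) := by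
  set G := proj s k * g * (proj s k)ᴴ
  have hG : proj s k * (gᴴ * g) * (proj s k)ᴴ = Gᴴ * G := by
    calc proj s k * (gᴴ * g) * (proj s k)ᴴ = (g * (proj s k)ᴴ)ᴴ * (g * (proj s k)ᴴ) := by
          simp only [conjTranspose_mul, conjTranspose_conjTranspose, Matrix.mul_assoc]
      _ = Gᴴ * (proj s k * (proj s k)ᴴ) * G := by
          rw [hg.mul_projH hs]
          simp only [G, conjTranspose_mul, conjTranspose_conjTranspose, Matrix.mul_assoc]
      _ = Gᴴ * G := by rw [proj_mul_projH hs, Matrix.mul_one]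
  have hdetG : G.det = ∏ i : Fin s, g (Fin.castLE hs i) (Fin.castLE hs i) := by
    rw [show G = _ from proj_mul_mul_projH hs g]
    exact det_of_isUpperTriangular fun i j hij => hg (Fin.castLE hs i) (Fin.castLE hs j) hij
  rw [hG, det_mul, det_conjTranspose, hdetG]

lemma delta_last {k : ℕ} (hk : 0 < k) (a : Fin k → ℝ) :
    delta a ⟨k - 1, Nat.sub_lt hk Nat.one_pos⟩ = a ⟨k - 1, Nat.sub_lt hk Nat.one_pos⟩ := by
  simp [delta, show ¬ (k - 1 + 1 < k) by omega]

lemma sum_Ici_delta {k : ℕ} (a : Fin k → ℝ) (j : Fin k) : ∑ i ∈ Ici j, delta a i = a j := by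
  obtain ⟨k, rfl⟩ := Nat.exists_eq_add_one_of_ne_zero j.pos.ne'
  induction j using Fin.reverseInduction with
  | last =>
    rw [show Ici (Fin.last k) = {Fin.last k} by ext; simp [Fin.last_le_iff]]
    simp [delta]
  | cast i ih =>
    have hIci : Ici i.castSucc = insert i.castSucc (Ici i.succ) := by
      ext l
      simp only [mem_Ici, mem_insert, Fin.le_def, Fin.ext_iff, Fin.val_castSucc, Fin.val_succ]
      omega
    rw [hIci, sum_insert (by simp [Fin.le_def]), ih]
    simp [delta, Fin.succ]

lemma relDet_eq_zero_of_det_eq_zero {k : ℕ} (hk : 0 < k) {a : Fin k → ℝ}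
    (ha : 0 < a ⟨k - 1, Nat.sub_lt hk Nat.one_pos⟩) {X : Matrix (Fin k) (Fin k) ℂ}
    (hX : X.det = 0) : relDet a X = 0 := by
  refine prod_eq_zero (mem_univ ⟨k - 1, Nat.sub_lt hk Nat.one_pos⟩) ?_
  rw [det_proj_mul_mul_projH_of_eq (by simp only; omega), hX, delta_last hk, Complex.zero_re,
    Real.zero_rpow ha.ne']

lemma det_one_updateCol {ι R : Type*} [Fintype ι] [DecidableEq ι] [CommRing R] (k : ι)
    (v : ι → R) : ((1 : Matrix ι ι R).updateCol k v).det = v k := by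
  rw [← cramer_apply, cramer_one]
  rfl

lemma UT_one_updateCol {n : ℕ} {k : Fin n} {v : Fin n → ℂ} (hv : ∀ j, k < j → v j = 0) :
    UT ((1 : Matrix (Fin n) (Fin n) ℂ).updateCol k v) := by
  intro i j hij
  rw [updateCol_apply]
  split_ifs with hjk
  · exact hv i (hjk ▸ hij)
  · exact one_apply_ne hij.ne'

lemma relDet_one_updateCol {n : ℕ} (p : Fin n → ℝ) {k : Fin n} {v : Fin n → ℂ}
    (hv : ∀ j, k < j → v j = 0) (hvk : v k ≠ 0) :
    relDet p (((1 : Matrix (Fin n) (Fin n) ℂ).updateCol k v)ᴴ * (1 : Matrix _ _ ℂ).updateCol k v)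
      = Complex.normSq (v k) ^ p k := by
  set h := (1 : Matrix (Fin n) (Fin n) ℂ).updateCol k v
  have hdiag : ∀ i, h i i = if (i : ℕ) = k then v k else 1 := by
    intro i
    simp only [h, updateCol_apply, one_apply_eq, Fin.val_inj]
    split_ifs with hik <;> simp [hik]
  have hminor : ∀ j : Fin n, (proj (j + 1) n * (hᴴ * h) * (proj (j + 1) n)ᴴ).det.re
      = if k ≤ j then Complex.normSq (v k) else 1 := by
    intro j
    rw [(UT_one_updateCol hv).det_proj_mul_conjTranspose_mul_self_mul_projH j.isLt]
    rw [show ∏ i : Fin (j + 1), h (Fin.castLE j.isLt i) (Fin.castLE j.isLt i)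
        = ∏ i ∈ range (j + 1), if i = (k : ℕ) then v k else 1 by
      rw [← Fin.prod_univ_eq_prod_range]
      exact prod_congr rfl fun i _ => hdiag _, prod_ite_eq' (range (j + 1))]
    by_cases hkj : k ≤ j
    · simp [hkj, Nat.lt_succ_iff.mpr (Fin.le_def.mp hkj), Complex.normSq_apply]
    · simp [hkj, show ¬ ((k : ℕ) < j + 1) by rw [Fin.le_def] at hkj; omega]
  have hpos : 0 < Complex.normSq (v k) := Complex.normSq_pos.mpr hvk
  have hfactor : ∀ j : Fin n, (if k ≤ j then Complex.normSq (v k) else 1) ^ delta p j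
      = if k ≤ j then Complex.normSq (v k) ^ delta p j else 1 := by
    intro j
    split_ifs <;> simp
  simp only [relDet, hminor, hfactor]
  rw [prod_ite, prod_const_one, mul_one, filter_le_eq_Ici, ← Real.rpow_sum_of_pos hpos,
    sum_Ici_delta]

lemma exists_ne_zero_forall_gt_eq_zero {ι M : Type*} [Fintype ι] [LinearOrder ι] [Zero M]
    {x : ι → M} (hx : x ≠ 0) : ∃ k, x k ≠ 0 ∧ ∀ j, k < j → x j = 0 := by
  classical
  obtain ⟨k, hk, hmax⟩ := (univ.filter (x · ≠ 0)).exists_max_image id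
    (by simpa [Finset.Nonempty, funext_iff] using hx)
  refine ⟨k, (mem_filter.mp hk).2, fun j hj => ?_⟩
  by_contra hxj
  exact (hmax j (by simp [hxj])).not_gt hj

lemma bddBelow_of_sInf_ne_zero {S : Set ℝ} (h : sInf S ≠ 0) : BddBelow S := by
  by_contra hS
  exact h (Real.sInf_of_not_bddBelow hS)

lemma cap_le {n m r : ℕ} {A : Fin r → Matrix (Fin m) (Fin n) ℂ} {p : Fin n → ℝ}
    {q : Fin m → ℝ} (hcap : cap A p q ≠ 0) {h : Matrix (Fin n) (Fin n) ℂ} (hh : IsUnit h.det)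
    (hUT : UT h) :
    cap A p q ≤ relDet q (cpMap A (h * diagonal (fun j => (p j : ℂ)) * hᴴ)) / relDet p (hᴴ * h) :=
  csInf_le (bddBelow_of_sInf_ne_zero hcap) ⟨h, hh, hUT, rfl⟩

lemma eq_zero_of_cap_pos_of_conjTranspose_mulVec {n m r : ℕ} (hm : 0 < m)
    {A : Fin r → Matrix (Fin m) (Fin n) ℂ} {p : Fin n → ℝ} {q : Fin m → ℝ}
    (hqm : 0 < q ⟨m - 1, Nat.sub_lt hm Nat.one_pos⟩) (hcap : 0 < cap A p q) {y : Fin m → ℂ}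
    (hy : ∀ i, (A i)ᴴ *ᵥ y = 0) : y = 0 := by
  by_contra hy0
  have hsing : (cpMap A (diagonal fun j => (p j : ℂ))).det = 0 :=
    exists_mulVec_eq_zero_iff.mp ⟨y, hy0, cpMap_mulVec_eq_zero hy _⟩
  have := cap_le hcap.ne' (h := 1) (by simp) (fun i j hij => one_apply_ne hij.ne')
  simp only [Matrix.one_mul, Matrix.mul_one, conjTranspose_one] at this
  rw [relDet_eq_zero_of_det_eq_zero hm hqm hsing, zero_div] at this
  linarith

lemma eq_zero_of_cap_pos_of_mulVec {n m r : ℕ} (hn : 0 < n)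
    {A : Fin r → Matrix (Fin m) (Fin n) ℂ} {p : Fin n → ℝ} {q : Fin m → ℝ} (hp : Antitone p)
    (hpn : 0 < p ⟨n - 1, Nat.sub_lt hn Nat.one_pos⟩) (hcap : 0 < cap A p q) {x : Fin n → ℂ}
    (hx : ∀ i, A i *ᵥ x = 0) : x = 0 := by
  by_contra hx0
  obtain ⟨k, hxk, hsupp⟩ := exists_ne_zero_forall_gt_eq_zero hx0
  have hpk : 0 < p k := hpn.trans_le (hp (Fin.le_def.mpr (Nat.le_sub_one_of_lt k.isLt)))
  set P := diagonal fun j => (p j : ℂ)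
  set h₀ := (1 : Matrix (Fin n) (Fin n) ℂ).updateCol k 0
  have hbound : ∀ s : ℝ, 0 < s → cap A p q ≤ relDet q (cpMap A (h₀ * P * h₀ᴴ)) / s ^ p k := by
    intro s hs
    set v := ((√s : ℂ) / x k) • x
    have hvk : v k = √s := by simp [v, hxk]
    have hsupp_v : ∀ j, k < j → v j = 0 := fun j hj => by simp [v, hsupp j hj]
    have hAv : ∀ i, A i * (1 : Matrix _ _ ℂ).updateCol k v = A i * h₀ := fun i => by
      simp only [h₀, mul_updateCol, v, mulVec_smul, hx, smul_zero, mulVec_zero]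
    have hvk0 : v k ≠ 0 := by simp [hvk, (Real.sqrt_pos.mpr hs).ne']
    calc cap A p q ≤ _ := cap_le hcap.ne' (by simp [det_one_updateCol, hvk0])
          (UT_one_updateCol hsupp_v)
      _ = _ := by
        rw [cpMap_conj_eq_of_mul_eq hAv, relDet_one_updateCol p hsupp_v hvk0, hvk,
          Complex.normSq_ofReal, Real.mul_self_sqrt hs.le]
  have hlim : Tendsto (fun s : ℝ => relDet q (cpMap A (h₀ * P * h₀ᴴ)) / s ^ p k) atTop (𝓝 0) :=
    tendsto_const_nhds.div_atTop (tendsto_rpow_atTop hpk)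
  exact hcap.not_ge (ge_of_tendsto hlim ((eventually_gt_atTop 0).mono hbound))

theorem stmt10_general {n m r : ℕ} (hn : 0 < n) (hm : 0 < m)
    (A : Fin r → Matrix (Fin m) (Fin n) ℂ)
    (p : Fin n → ℝ) (q : Fin m → ℝ)
    (hp : Antitone p)
    (hpn : 0 < p ⟨n - 1, Nat.sub_lt hn Nat.one_pos⟩)
    (hqm : 0 < q ⟨m - 1, Nat.sub_lt hm Nat.one_pos⟩)
    (hcap : 0 < cap A p q) :
    (∀ X : Matrix (Fin n) (Fin n) ℂ, X.PosDef → (cpMap A X).PosDef) ∧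
    (∀ Y : Matrix (Fin m) (Fin m) ℂ, Y.PosDef → (cpDual A Y).PosDef) := by
  refine ⟨fun X hX => cpMap_posDef A
      (fun y hy => eq_zero_of_cap_pos_of_conjTranspose_mulVec hm hqm hcap hy) hX,
    fun Y hY => ?_⟩
  rw [cpDual_eq_cpMap_conjTranspose]
  refine cpMap_posDef _ (fun x hx => ?_) hY
  simp only [conjTranspose_conjTranspose] at hx
  exact eq_zero_of_cap_pos_of_mulVec hn hp hpn hcap hx

/-- Lemma (nonsingularity): if `P, Q` are invertible and `cap(T,P,Q) > 0`, then `T` and `T*`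
map positive definite matrices to positive definite matrices. -/
theorem stmt10 {n m r : ℕ} (hn : 0 < n) (hm : 0 < m)
    (A : Fin r → Matrix (Fin m) (Fin n) ℂ)
    (p : Fin n → ℝ) (q : Fin m → ℝ)
    (hp : Antitone p) (hp0 : ∀ j, 0 ≤ p j) (hq : Antitone q) (hq0 : ∀ i, 0 ≤ q i)
    (hpn : 0 < p ⟨n - 1, Nat.sub_lt hn Nat.one_pos⟩)
    (hqm : 0 < q ⟨m - 1, Nat.sub_lt hm Nat.one_pos⟩)
    (hcap : 0 < cap A p q) :
    (∀ X : Matrix (Fin n) (Fin n) ℂ, X.PosDef → (cpMap A X).PosDef) ∧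
    (∀ Y : Matrix (Fin m) (Fin m) ℂ, Y.PosDef → (cpDual A Y).PosDef) :=
  stmt10_general hn hm A p q hp hpn hqm hcap
end
end

section
/- Let T, p, q, P, Q be as in the setup. For every invertible upper-triangular g ∈ Mat_m(ℂ) and every invertible upper-triangular h ∈ Mat_n(ℂ), cap(T_{g,h}, P, Q) = det(Q, g† g) · det(P, h† h) · cap(T, P, Q). -/
open Matrix BigOperators

noncomputable section

section Helpers

open scoped Pointwise

lemma rpow_mul_left {a : ℝ} (ha : 0 ≤ a) (b c : ℝ) :
    (a * b) ^ c = a ^ c * b ^ c := by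
  rcases le_or_gt 0 b with hb | hb
  · exact Real.mul_rpow ha hb
  rcases ha.eq_or_lt with h0 | h0
  · rcases eq_or_ne c 0 with rfl | hc
    · simp
    · rw [← h0, zero_mul, Real.zero_rpow hc, zero_mul]
  · rw [Real.rpow_def_of_neg (mul_neg_of_pos_of_neg h0 hb),
      Real.rpow_def_of_pos h0, Real.rpow_def_of_neg hb,
      Real.log_mul (ne_of_gt h0) (ne_of_lt hb), add_mul, Real.exp_add]
    ring

lemma conj_re_aux (d x : ℂ) : (star d * x * d).re = Complex.normSq d * x.re := by
  simp [Complex.mul_re, Complex.mul_im, Complex.normSq_apply]; ring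

lemma proj_mul_apply {j k : ℕ} (hjk : j ≤ k) {α : Type*} [Fintype α]
    (M : Matrix (Fin k) α ℂ) (i : Fin j) (a : α) :
    (proj j k * M) i a = M (Fin.castLE hjk i) a := by
  simp only [Matrix.mul_apply, proj, Matrix.of_apply]
  rw [Finset.sum_eq_single (Fin.castLE hjk i)]
  · simp
  · intro b _ hb
    rw [if_neg, zero_mul]
    intro hc
    exact hb (by ext; simpa using hc.symm)
  · simp

lemma mul_projT_apply {j k : ℕ} (hjk : j ≤ k) {α : Type*} [Fintype α]
    (M : Matrix α (Fin k) ℂ) (a : α) (i : Fin j) :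
    (M * (proj j k)ᴴ) a i = M a (Fin.castLE hjk i) := by
  simp only [Matrix.mul_apply, Matrix.conjTranspose_apply, proj, Matrix.of_apply]
  rw [Finset.sum_eq_single (Fin.castLE hjk i)]
  · simp
  · intro b _ hb
    rw [if_neg, star_zero, mul_zero]
    intro hc
    exact hb (by ext; simpa using hc.symm)
  · simp

lemma block_apply {j k : ℕ} (hjk : j ≤ k) (X : Matrix (Fin k) (Fin k) ℂ) (b c : Fin j) :
    (proj j k * X * (proj j k)ᴴ) b c = X (Fin.castLE hjk b) (Fin.castLE hjk c) := by
  rw [mul_projT_apply hjk, proj_mul_apply hjk]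

lemma projT_mul_apply {j k : ℕ} {α : Type*} [Fintype α]
    (N : Matrix (Fin j) α ℂ) (a : Fin k) (i : α) :
    ((proj j k)ᴴ * N) a i = if hak : (a : ℕ) < j then N ⟨(a : ℕ), hak⟩ i else 0 := by
  simp only [Matrix.mul_apply, Matrix.conjTranspose_apply, proj, Matrix.of_apply]
  split
  · next hak =>
      rw [Finset.sum_eq_single (⟨(a : ℕ), hak⟩ : Fin j)]
      · simp
      · intro b _ hb
        rw [if_neg, star_zero, zero_mul]
        intro hc
        exact hb (by ext; simpa using hc)
      · simp
  · next hak =>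
      apply Finset.sum_eq_zero
      intro b _
      rw [if_neg, star_zero, zero_mul]
      intro hc
      exact hak (hc ▸ b.isLt)

lemma proj_projT {j k : ℕ} (hjk : j ≤ k) :
    proj j k * (proj j k)ᴴ = (1 : Matrix (Fin j) (Fin j) ℂ) := by
  ext b c
  rw [mul_projT_apply hjk, proj, Matrix.of_apply, Matrix.one_apply]
  simp [Fin.ext_iff, eq_comm]

lemma UT_mul_projT {j k : ℕ} (hjk : j ≤ k) {g : Matrix (Fin k) (Fin k) ℂ} (hg : UT g) :
    g * (proj j k)ᴴ = (proj j k)ᴴ * (proj j k * g * (proj j k)ᴴ) := by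
  ext a i
  rw [mul_projT_apply hjk, projT_mul_apply]
  split
  · next hak =>
      rw [block_apply hjk]
      congr 1
  · next hak =>
      refine hg _ _ ?_
      simp only [Fin.lt_def, Fin.coe_castLE]
      exact lt_of_lt_of_le i.isLt (le_of_not_gt hak)

lemma proj_mul_UT_conj {j k : ℕ} (hjk : j ≤ k) {g : Matrix (Fin k) (Fin k) ℂ} (hg : UT g) :
    proj j k * gᴴ = (proj j k * g * (proj j k)ᴴ)ᴴ * proj j k := by
  have h1 := congrArg Matrix.conjTranspose (UT_mul_projT hjk hg)
  simpa [Matrix.conjTranspose_mul, Matrix.mul_assoc] using h1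

lemma conj_block {j k : ℕ} (hjk : j ≤ k) {g : Matrix (Fin k) (Fin k) ℂ} (hg : UT g)
    (X : Matrix (Fin k) (Fin k) ℂ) :
    proj j k * (gᴴ * X * g) * (proj j k)ᴴ
      = (proj j k * g * (proj j k)ᴴ)ᴴ * (proj j k * X * (proj j k)ᴴ) *
          (proj j k * g * (proj j k)ᴴ) := by
  set Pj := proj j k
  set B := Pj * g * Pjᴴ with hB
  calc Pj * (gᴴ * X * g) * Pjᴴ = (Pj * gᴴ) * X * (g * Pjᴴ) := by
        simp only [Matrix.mul_assoc]
    _ = (Bᴴ * Pj) * X * (Pjᴴ * B) := by rw [UT_mul_projT hjk hg, proj_mul_UT_conj hjk hg]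
    _ = Bᴴ * (Pj * X * Pjᴴ) * B := by simp only [Matrix.mul_assoc]

lemma gram_block {j k : ℕ} (hjk : j ≤ k) {g : Matrix (Fin k) (Fin k) ℂ} (hg : UT g) :
    proj j k * (gᴴ * g) * (proj j k)ᴴ
      = (proj j k * g * (proj j k)ᴴ)ᴴ * (proj j k * g * (proj j k)ᴴ) := by
  set Pj := proj j k
  set B := Pj * g * Pjᴴ with hB
  calc Pj * (gᴴ * g) * Pjᴴ = (Pj * gᴴ) * (g * Pjᴴ) := by simp only [Matrix.mul_assoc]
    _ = (Bᴴ * Pj) * (Pjᴴ * B) := by rw [UT_mul_projT hjk hg, proj_mul_UT_conj hjk hg]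
    _ = Bᴴ * (Pj * Pjᴴ) * B := by simp only [Matrix.mul_assoc]
    _ = Bᴴ * B := by rw [proj_projT hjk, Matrix.mul_one]

lemma relDet_conj {k : ℕ} (a : Fin k → ℝ) {g : Matrix (Fin k) (Fin k) ℂ} (hg : UT g)
    (X : Matrix (Fin k) (Fin k) ℂ) :
    relDet a (gᴴ * X * g) = relDet a (gᴴ * g) * relDet a X := by
  unfold relDet
  rw [← Finset.prod_mul_distrib]
  refine Finset.prod_congr rfl fun j _ => ?_
  have hjk : (j : ℕ) + 1 ≤ k := j.isLt
  set Pj := proj ((j : ℕ) + 1) k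
  set B := Pj * g * Pjᴴ with hB
  have d1 : (Pj * (gᴴ * X * g) * Pjᴴ).det.re
      = Complex.normSq B.det * (Pj * X * Pjᴴ).det.re := by
    rw [conj_block hjk hg, Matrix.det_mul, Matrix.det_mul, Matrix.det_conjTranspose]
    exact conj_re_aux _ _
  have d2 : (Pj * (gᴴ * g) * Pjᴴ).det.re = Complex.normSq B.det := by
    rw [gram_block hjk hg, Matrix.det_mul, Matrix.det_conjTranspose]
    have h1 := conj_re_aux B.det 1
    rw [mul_one] at h1
    rw [h1, Complex.one_re, mul_one]
  rw [d1, d2]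
  exact rpow_mul_left (Complex.normSq_nonneg _) _ _

lemma block_det_ne_zero {j k : ℕ} (hjk : j ≤ k) {h : Matrix (Fin k) (Fin k) ℂ}
    (hUT : UT h) (hu : IsUnit h.det) :
    (proj j k * h * (proj j k)ᴴ).det ≠ 0 := by
  have hbt : (proj j k * h * (proj j k)ᴴ).BlockTriangular id := by
    intro b c hbc
    rw [block_apply hjk]
    have hbc' : (c : ℕ) < (b : ℕ) := hbc
    exact hUT _ _ hbc'
  have hht : h.BlockTriangular id := fun i j hij => hUT i j hij
  rw [Matrix.det_of_upperTriangular hbt]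
  rw [Matrix.det_of_upperTriangular hht, isUnit_iff_ne_zero] at hu
  have hdiag : ∀ i : Fin k, h i i ≠ 0 := by
    intro i hi
    exact hu (Finset.prod_eq_zero (Finset.mem_univ i) hi)
  refine Finset.prod_ne_zero_iff.mpr fun b _ => ?_
  rw [block_apply hjk]
  exact hdiag _

lemma relDet_gram_pos {k : ℕ} (a : Fin k → ℝ) {h : Matrix (Fin k) (Fin k) ℂ}
    (hUT : UT h) (hu : IsUnit h.det) : 0 < relDet a (hᴴ * h) := by
  unfold relDet
  apply Finset.prod_pos
  intro j _
  apply Real.rpow_pos_of_pos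
  have hjk : (j : ℕ) + 1 ≤ k := j.isLt
  have d2 : (proj ((j : ℕ) + 1) k * (hᴴ * h) * (proj ((j : ℕ) + 1) k)ᴴ).det.re
      = Complex.normSq (proj ((j : ℕ) + 1) k * h * (proj ((j : ℕ) + 1) k)ᴴ).det := by
    rw [gram_block hjk hUT, Matrix.det_mul, Matrix.det_conjTranspose]
    have h1 := conj_re_aux (proj ((j : ℕ) + 1) k * h * (proj ((j : ℕ) + 1) k)ᴴ).det 1
    rw [mul_one] at h1
    rw [h1, Complex.one_re, mul_one]
  rw [d2]
  exact Complex.normSq_pos.mpr (block_det_ne_zero hjk hUT hu)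

lemma UT_mul {k : ℕ} {g h : Matrix (Fin k) (Fin k) ℂ} (hg : UT g) (hh : UT h) :
    UT (g * h) := by
  have := Matrix.BlockTriangular.mul (b := (id : Fin k → Fin k))
    (fun i j hij => hg i j hij) (fun i j hij => hh i j hij)
  exact fun i j hij => this hij

lemma UT_inv {k : ℕ} {h : Matrix (Fin k) (Fin k) ℂ} (hh : UT h) (hu : IsUnit h.det) :
    UT h⁻¹ := by
  haveI := h.invertibleOfIsUnitDet hu
  have := Matrix.blockTriangular_inv_of_blockTriangular (b := (id : Fin k → Fin k))
    (fun i j hij => hh i j hij)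
  exact fun i j hij => this hij

lemma cpMap_conj {n m r : ℕ} (A : Fin r → Matrix (Fin m) (Fin n) ℂ)
    (g : Matrix (Fin m) (Fin m) ℂ) (h : Matrix (Fin n) (Fin n) ℂ)
    (X : Matrix (Fin n) (Fin n) ℂ) :
    cpMap (fun i => gᴴ * A i * h) X = gᴴ * cpMap A (h * X * hᴴ) * g := by
  simp only [cpMap, Finset.mul_sum, Finset.sum_mul, Matrix.conjTranspose_mul,
    Matrix.conjTranspose_conjTranspose, Matrix.mul_assoc]

end Helpers

open scoped Pointwise

/-- Lemma (capacity update): for invertible upper triangular `g, h`,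
`cap(T_{g,h}, P, Q) = det(Q, g†g) · det(P, h†h) · cap(T, P, Q)`. -/
theorem stmt11 {n m r : ℕ} (A : Fin r → Matrix (Fin m) (Fin n) ℂ)
    (p : Fin n → ℝ) (q : Fin m → ℝ)
    (hp : Antitone p) (hp0 : ∀ j, 0 ≤ p j) (hq : Antitone q) (hq0 : ∀ i, 0 ≤ q i)
    (g : Matrix (Fin m) (Fin m) ℂ) (h : Matrix (Fin n) (Fin n) ℂ)
    (hg : IsUnit g.det) (hgu : UT g) (hh : IsUnit h.det) (hhu : UT h) :
    cap (fun i => gᴴ * A i * h) p q =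
      relDet q (gᴴ * g) * relDet p (hᴴ * h) * cap A p q := by
  classical
  have hPg : 0 < relDet q (gᴴ * g) := relDet_gram_pos q hgu hg
  have hPh : 0 < relDet p (hᴴ * h) := relDet_gram_pos p hhu hh
  set c : ℝ := relDet q (gᴴ * g) * relDet p (hᴴ * h) with hcdef
  have hc0 : 0 ≤ c := le_of_lt (mul_pos hPg hPh)
  have key : ∀ h' : Matrix (Fin n) (Fin n) ℂ, IsUnit h'.det → UT h' →
      relDet q (cpMap (fun i => gᴴ * A i * h)
          (h' * Matrix.diagonal (fun j => (p j : ℂ)) * h'ᴴ)) / relDet p (h'ᴴ * h')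
        = c * (relDet q (cpMap A
            ((h * h') * Matrix.diagonal (fun j => (p j : ℂ)) * (h * h')ᴴ)) /
          relDet p ((h * h')ᴴ * (h * h'))) := by
    intro h' hu' hut'
    have hX : h * (h' * Matrix.diagonal (fun j => (p j : ℂ)) * h'ᴴ) * hᴴ
        = (h * h') * Matrix.diagonal (fun j => (p j : ℂ)) * (h * h')ᴴ := by
      simp only [Matrix.conjTranspose_mul, Matrix.mul_assoc]
    have hden : relDet p ((h * h')ᴴ * (h * h'))
        = relDet p (h'ᴴ * h') * relDet p (hᴴ * h) := by
      have e : (h * h')ᴴ * (h * h') = h'ᴴ * (hᴴ * h) * h' := by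
        simp only [Matrix.conjTranspose_mul, Matrix.mul_assoc]
      rw [e, relDet_conj p hut']
    rw [cpMap_conj, hX, relDet_conj q hgu, hden]
    have h1 : 0 < relDet p (h'ᴴ * h') := relDet_gram_pos p hut' hu'
    field_simp
    ring
  have cap_eq : ∀ B : Fin r → Matrix (Fin m) (Fin n) ℂ,
      cap B p q = sInf { x : ℝ | ∃ h0 : Matrix (Fin n) (Fin n) ℂ, IsUnit h0.det ∧ UT h0 ∧
        x = relDet q (cpMap B (h0 * Matrix.diagonal (fun j => (p j : ℂ)) * h0ᴴ)) /
          relDet p (h0ᴴ * h0) } := fun B => rfl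
  rw [cap_eq, cap_eq]
  have hset : { x : ℝ | ∃ h0 : Matrix (Fin n) (Fin n) ℂ, IsUnit h0.det ∧ UT h0 ∧
        x = relDet q (cpMap (fun i => gᴴ * A i * h)
            (h0 * Matrix.diagonal (fun j => (p j : ℂ)) * h0ᴴ)) / relDet p (h0ᴴ * h0) }
      = c • { x : ℝ | ∃ h0 : Matrix (Fin n) (Fin n) ℂ, IsUnit h0.det ∧ UT h0 ∧
        x = relDet q (cpMap A (h0 * Matrix.diagonal (fun j => (p j : ℂ)) * h0ᴴ)) /
          relDet p (h0ᴴ * h0) } := by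
    ext x
    simp only [Set.mem_smul_set, Set.mem_setOf_eq]
    constructor
    · rintro ⟨h', hu', hut', rfl⟩
      refine ⟨_, ⟨h * h', by rw [Matrix.det_mul]; exact hh.mul hu',
        UT_mul hhu hut', rfl⟩, ?_⟩
      rw [smul_eq_mul]
      exact (key h' hu' hut').symm
    · rintro ⟨y, ⟨h'', hu'', hut'', rfl⟩, rfl⟩
      have hinvdet : IsUnit (h⁻¹).det := h.isUnit_nonsing_inv_det hh
      have hu3 : IsUnit (h⁻¹ * h'').det := by
        rw [Matrix.det_mul]; exact hinvdet.mul hu''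
      refine ⟨h⁻¹ * h'', hu3, UT_mul (UT_inv hhu hh) hut'', ?_⟩
      have hcomp : h * (h⁻¹ * h'') = h'' := by
        rw [← Matrix.mul_assoc, Matrix.mul_nonsing_inv _ hh, Matrix.one_mul]
      rw [key (h⁻¹ * h'') hu3 (UT_mul (UT_inv hhu hh) hut''), hcomp, smul_eq_mul]
  rw [hset, Real.sInf_smul_of_nonneg hc0, smul_eq_mul]
end
end
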